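/- arXiv:1112.0826 — 11 statements merged into one kernel-verified Lean document; each statement's English description precedes it below -/
import Mathlib

section
/- In an α-center stable k-median instance with α ≥ 1+√2, for any points p ∈ C_i and q ∈ C_j with j ≠ i in the optimal clustering, d(c_i, q) > d(c_i, p). -/
/-- α-center stability: every point of an optimal cluster is α times closer to its own
center than to any other center. -/
def CenterStable {S : Type*} (d : S → S → ℝ) {k : ℕ} (C : Fin k → Finset S)
    (c : Fin k → S) (α : ℝ) : Prop :=
  ∀ i j : Fin k, i ≠ j → ∀ p ∈ C i, α * d p (c i) < d p (c j)

/-- in an α-center stable k-median instance with α ≥ 1+√2, for p ∈ C_i and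
q ∈ C_j (j ≠ i), d(c_i, q) > d(c_i, p). -/
theorem stmt1 {S : Type*} [MetricSpace S] [Fintype S] {k : ℕ} {α : ℝ}
    (hα : 1 + Real.sqrt 2 ≤ α) (C : Fin k → Finset S) (c : Fin k → S)
    (hst : CenterStable dist C c α)
    {i j : Fin k} (hij : j ≠ i) {p q : S} (hp : p ∈ C i) (hq : q ∈ C j) :
    dist (c i) q > dist (c i) p := by
  have h1 : α * dist q (c j) < dist q (c i) := hst j i hij q hq
  have h2 : α * dist p (c i) < dist p (c j) := hst i j (Ne.symm hij) p hp
  have t1 : dist p (c j) ≤ dist p (c i) + dist (c i) (c j) := dist_triangle _ _ _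
  have t2 : dist (c i) (c j) ≤ dist (c i) q + dist q (c j) := dist_triangle _ _ _
  have e1 : dist q (c i) = dist (c i) q := dist_comm _ _
  have e2 : dist (c i) p = dist p (c i) := dist_comm _ _
  have s2 : Real.sqrt 2 ^ 2 = 2 := Real.sq_sqrt (by norm_num)
  have hs : (0:ℝ) ≤ Real.sqrt 2 := Real.sqrt_nonneg 2
  have n1 : 0 ≤ dist q (c j) := dist_nonneg
  have n2 : 0 ≤ dist p (c i) := dist_nonneg
  have n3 : 0 ≤ dist (c i) q := dist_nonneg
  rw [e2]
  nlinarith [mul_nonneg n2 hs, mul_nonneg n1 hs, mul_nonneg n3 hs]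
end

section
/- In an α-center stable k-median instance, for any points p ∈ C_i and q ∈ C_j with j ≠ i, d(p,q) > (α−1)·max(d(p,c_i), d(q,c_j)). In particular for α ≥ 2, d(p,c_i) < d(p,q). -/
/-- in an α-center stable instance, for p ∈ C_i, q ∈ C_j (j ≠ i),
d(p,q) > (α−1)·max(d(p,c_i), d(q,c_j)); in particular for α ≥ 2, d(p,c_i) < d(p,q). -/
theorem stmt2 {S : Type*} [MetricSpace S] [Fintype S] {k : ℕ} {α : ℝ}
    (C : Fin k → Finset S) (c : Fin k → S)
    (hst : CenterStable dist C c α)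
    {i j : Fin k} (hij : j ≠ i) {p q : S} (hp : p ∈ C i) (hq : q ∈ C j) :
    dist p q > (α - 1) * max (dist p (c i)) (dist q (c j)) ∧
      (2 ≤ α → dist p (c i) < dist p q) := by
  have h1 : α * dist p (c i) < dist p (c j) := hst i j (fun h => hij h.symm) p hp
  have h2 : α * dist q (c j) < dist q (c i) := hst j i hij q hq
  have t1 : dist p (c j) ≤ dist p q + dist q (c j) := dist_triangle _ _ _
  have t2 : dist q (c i) ≤ dist q p + dist p (c i) := dist_triangle _ _ _
  have hqp : dist q p = dist p q := dist_comm _ _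
  have hmain : dist p q > (α - 1) * max (dist p (c i)) (dist q (c j)) := by
    rcases max_cases (dist p (c i)) (dist q (c j)) with ⟨he, hle⟩ | ⟨he, hlt⟩ <;>
      rw [he] <;> nlinarith [dist_nonneg (x := p) (y := c i), dist_nonneg (x := q) (y := c j)]
  refine ⟨hmain, fun hα => ?_⟩
  have : dist p (c i) ≤ max (dist p (c i)) (dist q (c j)) := le_max_left _ _
  nlinarith [dist_nonneg (x := p) (y := c i), dist_nonneg (x := q) (y := c j), le_max_left (dist p (c i)) (dist q (c j)), le_max_right (dist p (c i)) (dist q (c j))]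
end

section
/- In an α-center stable k-median instance with α ≥ 1+√2, the ball B(c_i, r_i) with r_i = max_{p∈C_i} d(c_i,p) contains only points of C_i, and every point inside the ball is strictly closer to c_i than to any point outside the ball. -/
/-- A family of `k` finsets forms a partition of `S`. -/
def IsPartition {S : Type*} {k : ℕ} (P : Fin k → Finset S) : Prop :=
  ∀ x : S, ∃! i, x ∈ P i

/-- with α ≥ 1+√2, the ball of radius r_i = max_{p∈C_i} d(c_i,p) around c_i
contains only points of C_i, and points inside the ball are closer to c_i than to any
point outside the ball. -/
theorem stmt3 {S : Type*} [MetricSpace S] [Fintype S] {k : ℕ} {α : ℝ}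
    (hα : 1 + Real.sqrt 2 ≤ α) (C : Fin k → Finset S) (c : Fin k → S)
    (hpart : IsPartition C) (hst : CenterStable dist C c α)
    (i : Fin k) (hne : (C i).Nonempty) :
    (∀ q : S, dist q (c i) ≤ (C i).sup' hne (fun p => dist (c i) p) → q ∈ C i) ∧
    (∀ p q : S, dist p (c i) ≤ (C i).sup' hne (fun p => dist (c i) p) →
      ¬ dist q (c i) ≤ (C i).sup' hne (fun p => dist (c i) p) →
      dist (c i) p < dist p q) := by
  set r := (C i).sup' hne (fun p => dist (c i) p) with hrdef
  have hs2 : Real.sqrt 2 * Real.sqrt 2 = 2 := Real.mul_self_sqrt (by norm_num)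
  have hs2n : (0:ℝ) ≤ Real.sqrt 2 := Real.sqrt_nonneg 2
  have hα2 : (2:ℝ) ≤ α := by nlinarith
  have hαsq : 2 * α + 1 ≤ α * α := by nlinarith
  -- the center belongs to its own cluster
  have hci : c i ∈ C i := by
    obtain ⟨j, hj, _⟩ := hpart (c i)
    rcases eq_or_ne j i with rfl | hji
    · exact hj
    · exfalso
      have := hst j i hji (c i) hj
      simp only [dist_self] at this
      nlinarith [(dist_nonneg : (0:ℝ) ≤ dist (c i) (c j))]
  have key : ∀ q : S, dist q (c i) ≤ r → q ∈ C i := by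
    intro q hq
    obtain ⟨j, hjq, huniq⟩ := hpart q
    rcases eq_or_ne j i with rfl | hji
    · exact hjq
    · exfalso
      have hr0 : 0 ≤ r := le_trans dist_nonneg hq
      obtain ⟨p, hp, hpr⟩ := Finset.exists_mem_eq_sup' hne (fun p => dist (c i) p)
      rcases eq_or_lt_of_le hr0 with hr | hrpos
      · -- r = 0 : q = c i, so q ∈ C i, contradiction with uniqueness
        have hq0 : dist q (c i) ≤ 0 := by linarith
        have : q = c i := by
          have := (dist_nonneg : (0:ℝ) ≤ dist q (c i))
          have : dist q (c i) = 0 := le_antisymm hq0 this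
          exact dist_eq_zero.mp this
        subst this
        exact hji (huniq i hci).symm
      · have h1 := hst i j (Ne.symm hji) p hp
        have h2 := hst j i hji q hjq
        have ht1 : dist p (c j) ≤ dist p q + dist q (c j) := dist_triangle _ _ _
        have ht2 : dist p q ≤ dist p (c i) + dist (c i) q := dist_triangle _ _ _
        have hcomm1 : dist p (c i) = dist (c i) p := dist_comm _ _
        have hcomm2 : dist (c i) q = dist q (c i) := dist_comm _ _
        have hb0 : 0 ≤ dist q (c j) := dist_nonneg
        have hpr' : dist (c i) p = r := hpr.symm
        nlinarith
  refine ⟨key, fun p q hp hq => ?_⟩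
  push_neg at hq
  have hpCi : p ∈ C i := key p hp
  obtain ⟨j, hjq, huniq⟩ := hpart q
  have hji : j ≠ i := by
    intro h
    rw [h] at hjq
    exact hq.not_ge (by rw [dist_comm]; exact Finset.le_sup' (fun p => dist (c i) p) hjq)
  have h1 := hst i j (Ne.symm hji) p hpCi
  have h2 := hst j i hji q hjq
  have ht1 : dist p (c j) ≤ dist p q + dist q (c j) := dist_triangle _ _ _
  have ht2 : dist q (c i) ≤ dist q p + dist p (c i) := dist_triangle _ _ _
  have hcomm1 : dist p (c i) = dist (c i) p := dist_comm _ _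
  have hcomm2 : dist q p = dist p q := dist_comm _ _
  have ha0 : 0 ≤ dist p (c i) := dist_nonneg
  have hb0 : 0 ≤ dist q (c j) := dist_nonneg
  have hD0 : 0 ≤ dist p q := dist_nonneg
  nlinarith
end

section
/- Suppose a k-median instance is α-center stable with α ≥ 1+√2. Let A be a strict subset of an optimal cluster C_i, and let A' be a subset of S disjoint from C_i, such that A' is either contained in another optimal cluster or is a union of optimal clusters other than C_i. If the center c of the closure distance d_S(A,A') lies in A, then for any q ∈ A' belonging to optimal cluster C_j, we have d(c, c_j) ≤ d_S(A,A') and max_{p∈C_i} d(c_i,p) < d(c,c_j). -/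
/-- `r` is a valid closure-distance value for `A`, `A'`. -/
def ClosureWitness {S : Type*} [DecidableEq S] (d : S → S → ℝ) (A A' : Finset S)
    (r : ℝ) : Prop :=
  0 ≤ r ∧ ∃ c ∈ A ∪ A', (∀ p ∈ A ∪ A', d p c ≤ r) ∧
    ∀ p q : S, d p c ≤ r → ¬ d q c ≤ r → d c p < d p q

/-- `r` is a valid closure-distance value witnessed by the specific center `cc`. -/
def ClosureWitnessAt {S : Type*} [DecidableEq S] (d : S → S → ℝ) (A A' : Finset S)
    (cc : S) (r : ℝ) : Prop :=
  0 ≤ r ∧ cc ∈ A ∪ A' ∧ (∀ p ∈ A ∪ A', d p cc ≤ r) ∧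
    ∀ p q : S, d p cc ≤ r → ¬ d q cc ≤ r → d cc p < d p q

/-- The closure distance between `A` and `A'`. -/
noncomputable def closureDist {S : Type*} [DecidableEq S] (d : S → S → ℝ)
    (A A' : Finset S) : ℝ :=
  sInf {r : ℝ | ClosureWitness d A A' r}

/-- if the closure distance between A ⊂ C_i and A' (a subset of another
cluster or union of other clusters) is witnessed by a center cc ∈ A, then for any
q ∈ A' with q ∈ C_j, d(cc, c_j) ≤ d_S(A,A') and max_{p∈C_i} d(c_i,p) < d(cc, c_j). -/
theorem stmt5 {S : Type*} [MetricSpace S] [Fintype S] [DecidableEq S] {k : ℕ} {α : ℝ}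
    (hα : 1 + Real.sqrt 2 ≤ α) (C : Fin k → Finset S) (c : Fin k → S)
    (hpart : IsPartition C) (hst : CenterStable dist C c α)
    (i : Fin k) (A A' : Finset S) (hAsub : A ⊂ C i) (hAne : A.Nonempty)
    (hA'ne : A'.Nonempty) (hA'disj : Disjoint A' (C i))
    (hA'cond : (∃ j, j ≠ i ∧ A' ⊆ C j) ∨
      (∃ J : Finset (Fin k), i ∉ J ∧ A' = J.biUnion C))
    (cc : S) (hcc : cc ∈ A)
    (hwit : ClosureWitnessAt dist A A' cc (closureDist dist A A'))
    (hCi : (C i).Nonempty) :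
    ∀ q ∈ A', ∀ j : Fin k, q ∈ C j →
      dist cc (c j) ≤ closureDist dist A A' ∧
      (C i).sup' hCi (fun p => dist (c i) p) < dist cc (c j) := by
  obtain ⟨hr0, hccmem, hball, hsep⟩ := hwit
  have hs2 : Real.sqrt 2 ^ 2 = 2 := Real.sq_sqrt (by norm_num)
  have hs2' : (1:ℝ) ≤ Real.sqrt 2 := by nlinarith [Real.sqrt_nonneg 2]
  have hα2 : (2:ℝ) < α := by nlinarith
  have hαq : α ^ 2 - 2 * α - 1 ≥ 0 := by nlinarith [Real.sqrt_nonneg 2]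
  intro q hq j hqj
  have hji : j ≠ i := by
    rintro rfl
    exact Finset.disjoint_left.mp hA'disj hq hqj
  have hccCi : cc ∈ C i := hAsub.subset hcc
  have s1 : α * dist cc (c i) < dist cc (c j) := hst i j (Ne.symm hji) cc hccCi
  have hqr : dist q cc ≤ closureDist dist A A' := hball q (Finset.mem_union_right _ hq)
  have h1 : dist cc (c j) ≤ closureDist dist A A' := by
    by_contra h
    push_neg at h
    have hsep' : dist cc q < dist q (c j) :=
      hsep q (c j) hqr (by rw [dist_comm]; linarith)
    have s2 : α * dist q (c j) < dist q (c i) := hst j i hji q hqj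
    have t1 : dist cc (c j) ≤ dist cc q + dist q (c j) := dist_triangle _ _ _
    have t2 : dist q (c i) ≤ dist q cc + dist cc (c i) := dist_triangle _ _ _
    have hc : dist cc q = dist q cc := dist_comm _ _
    nlinarith [(dist_nonneg : (0:ℝ) ≤ dist q (c j)), (dist_nonneg : (0:ℝ) ≤ dist cc q),
      (dist_nonneg : (0:ℝ) ≤ dist cc (c i)), sq_nonneg α]
  refine ⟨h1, ?_⟩
  rw [Finset.sup'_lt_iff]
  intro p hp
  have s3 : α * dist p (c i) < dist p (c j) := hst i j (Ne.symm hji) p hp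
  have t : dist p (c j) ≤ dist p (c i) + dist (c i) cc + dist cc (c j) :=
    dist_triangle4 _ _ _ _
  have hc2 : dist (c i) cc = dist cc (c i) := dist_comm _ _
  have hc3 : dist (c i) p = dist p (c i) := dist_comm _ _
  have hD : (0:ℝ) ≤ dist cc (c j) := dist_nonneg
  have hm : (0:ℝ) ≤ dist p (c i) := dist_nonneg
  rw [hc3]
  nlinarith [mul_nonneg (by linarith : (0:ℝ) ≤ α) hD, sq_nonneg (α - 1)]
end

section
/- Suppose a k-median instance is α-center stable with α ≥ 1+√2. In the closure linkage process maintaining a clustering laminar to the optimal clustering, if A is a strict subset of optimal cluster C_i and A' is a subset of another optimal cluster or a union of other optimal clusters, then there exists a current cluster B ⊆ C_i \ A with closure distance d_S(A,B) < d_S(A,A'). Consequently merges preserve laminarity with the optimal clustering. -/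
/-- in the closure linkage process, if the current clustering `P` is laminar
to the optimal clustering, `A ∈ P` is a strict subset of optimal cluster `C i`, and
`A' ∈ P` is a subset of another optimal cluster or a union of other optimal clusters,
then some current cluster `B ⊆ C i \ A` has closure distance to `A` strictly smaller
than `d_S(A, A')`; hence merges preserve laminarity. -/
theorem stmt6 {S : Type*} [MetricSpace S] [Fintype S] [DecidableEq S] {k : ℕ} {α : ℝ}
    (hα : 1 + Real.sqrt 2 ≤ α) (C : Fin k → Finset S) (c : Fin k → S)
    (hpart : IsPartition C) (hst : CenterStable dist C c α)
    (P : Finset (Finset S)) (hPne : ∀ B ∈ P, B.Nonempty)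
    (hPpart : ∀ x : S, ∃! B, B ∈ P ∧ x ∈ B)
    (hlam : ∀ B ∈ P, ∀ i : Fin k, B ⊆ C i ∨ C i ⊆ B ∨ Disjoint B (C i))
    (A A' : Finset S) (hA : A ∈ P) (hA' : A' ∈ P)
    (i : Fin k) (hAi : A ⊂ C i)
    (hA'cond : (∃ j, j ≠ i ∧ A' ⊆ C j) ∨
      (∃ J : Finset (Fin k), i ∉ J ∧ A' = J.biUnion C)) :
    ∃ B ∈ P, B ⊆ C i \ A ∧ closureDist dist A B < closureDist dist A A' := by
  classical
  -- basic facts about α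
  have hs2 : Real.sqrt 2 ^ 2 = 2 := Real.sq_sqrt (by norm_num)
  have hs2n : (0:ℝ) ≤ Real.sqrt 2 := Real.sqrt_nonneg 2
  have h12 : (1:ℝ) < Real.sqrt 2 := by nlinarith
  have hα2 : (2:ℝ) < α := by nlinarith
  have hα0 : (0:ℝ) < α := by linarith
  have hαq : 0 ≤ α^2 - 2*α - 1 := by nlinarith
  -- each center lies in its own cluster
  have hcC : ∀ m, c m ∈ C m := by
    intro m
    obtain ⟨u, hu, -⟩ := hpart (c m)
    by_cases hum : u = m
    · exact hum ▸ hu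
    · exfalso
      have h1 := hst u m hum (c m) hu
      have h2 : dist (c m) (c m) = 0 := dist_self _
      have h3 : (0:ℝ) ≤ dist (c m) (c u) := dist_nonneg
      nlinarith
  -- nonemptiness
  obtain ⟨a₀, ha₀⟩ := hPne A hA
  obtain ⟨a₀', ha₀'⟩ := hPne A' hA'
  have hAsub : A ⊆ C i := hAi.subset
  have ha₀Ci : a₀ ∈ C i := hAsub ha₀
  have hCiNe : (C i).Nonempty := ⟨a₀, ha₀Ci⟩
  -- the farthest point of C i from c i; the radius is `dist qs (c i)`
  obtain ⟨qs, hqsCi, hqsmax⟩ := Finset.exists_max_image (C i) (fun p => dist p (c i)) hCiNe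
  have hri0 : (0:ℝ) ≤ dist qs (c i) := dist_nonneg
  have hmax : ∀ p ∈ C i, dist p (c i) ≤ dist qs (c i) := hqsmax
  -- a point of C i not in A
  obtain ⟨x₀, hx₀Ci, hx₀A⟩ := Finset.exists_of_ssubset hAi
  -- positive radius
  have hripos : 0 < dist qs (c i) := by
    rcases lt_or_eq_of_le hri0 with h | h
    · exact h
    · exfalso
      have h1 : x₀ = c i := dist_le_zero.mp (h ▸ hmax x₀ hx₀Ci)
      have h2 : a₀ = c i := dist_le_zero.mp (h ▸ hmax a₀ ha₀Ci)
      exact hx₀A (h1.trans h2.symm ▸ ha₀)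
  -- every point of A' lies in some cluster C j with j ≠ i
  have hA'cl : ∀ y ∈ A', ∃ j, j ≠ i ∧ y ∈ C j := by
    intro y hy
    rcases hA'cond with ⟨j, hj, hsub⟩ | ⟨J, hiJ, hEq⟩
    · exact ⟨j, hj, hsub hy⟩
    · rw [hEq] at hy
      obtain ⟨j, hjJ, hyj⟩ := Finset.mem_biUnion.mp hy
      exact ⟨j, fun h => hiJ (h ▸ hjJ), hyj⟩
  obtain ⟨j₀, hj₀, ha₀'j₀⟩ := hA'cl a₀' ha₀'
  -- distance between centers is large
  have hcicj : ∀ j, j ≠ i → (α - 1) * dist qs (c i) < dist (c i) (c j) := by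
    intro j hj
    have h1 : α * dist qs (c i) < dist qs (c j) := hst i j (fun h => hj h.symm) qs hqsCi
    have t : dist qs (c j) ≤ dist qs (c i) + dist (c i) (c j) := dist_triangle _ _ _
    linarith
  -- gap lemma: a point of C u is farther than the radius from c v
  have hgap : ∀ u v : Fin k, u ≠ v → ∀ x ∈ C u,
      (α - 1) * dist qs (c i) < dist (c u) (c v) → dist qs (c i) < dist x (c v) := by
    intro u v huv x hx hR
    have h1 : α * dist x (c u) < dist x (c v) := hst u v huv x hx
    have t : dist (c u) (c v) ≤ dist (c u) x + dist x (c v) := dist_triangle _ _ _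
    have e : dist (c u) x = dist x (c u) := dist_comm _ _
    nlinarith [dist_nonneg (x := x) (y := c u), dist_nonneg (x := x) (y := c v),
      mul_lt_mul_of_pos_left hR hα0, mul_le_mul_of_nonneg_left t (le_of_lt hα0)]
  -- key lemma: the opposite center is captured by any witness ball
  have hkey : ∀ (r : ℝ) (x : S) (u v : Fin k), u ≠ v → x ∈ C u → ∀ y ∈ C v,
      dist y x ≤ r → (∀ p q : S, dist p x ≤ r → ¬ dist q x ≤ r → dist x p < dist p q) →
      dist (c v) x ≤ r := by
    intro r x u v huv hx y hy hyr hsep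
    by_contra hcv
    have hs := hsep y (c v) hyr hcv
    have h1 : α * dist y (c v) < dist y (c u) := hst v u (Ne.symm huv) y hy
    have t1 : dist y (c u) ≤ dist y x + dist x (c u) := dist_triangle _ _ _
    have h2 : α * dist x (c u) < dist x (c v) := hst u v huv x hx
    have t2 : dist x (c v) ≤ dist x y + dist y (c v) := dist_triangle _ _ _
    have e : dist y x = dist x y := dist_comm _ _
    nlinarith [dist_nonneg (x := x) (y := y), dist_nonneg (x := y) (y := c v),
      dist_nonneg (x := x) (y := c u), mul_lt_mul_of_pos_left h1 hα0]
  -- the ball of radius `dist qs (c i)` around c i contains only C i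
  have hball : ∀ x : S, dist x (c i) ≤ dist qs (c i) → x ∈ C i := by
    intro x hx
    obtain ⟨m, hm, -⟩ := hpart x
    by_cases hmi : m = i
    · exact hmi ▸ hm
    · exfalso
      have h1 : α * dist x (c m) < dist x (c i) := hst m i hmi x hm
      have h2 : α * dist qs (c i) < dist qs (c m) := hst i m (fun h => hmi h.symm) qs hqsCi
      have t : dist qs (c m) ≤ dist qs (c i) + dist (c i) x + dist x (c m) := by
        have u1 : dist qs (c m) ≤ dist qs x + dist x (c m) := dist_triangle _ _ _
        have u2 : dist qs x ≤ dist qs (c i) + dist (c i) x := dist_triangle _ _ _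
        linarith
      have e : dist (c i) x = dist x (c i) := dist_comm _ _
      nlinarith [dist_nonneg (x := x) (y := c m), dist_nonneg (x := x) (y := c i),
        mul_lt_mul_of_pos_left h2 hα0, mul_le_mul_of_nonneg_left hx (le_of_lt hα0)]
  -- separation for the (A, B) witness
  have hcc : ∀ p ∈ C i, ∀ q : S, ¬ dist q (c i) ≤ dist qs (c i) →
      dist (c i) p < dist p q := by
    intro p hp q hq
    obtain ⟨m, hm, -⟩ := hpart q
    have hmi : m ≠ i := fun h => hq (hmax q (h ▸ hm))
    have h1 : α * dist p (c i) < dist p (c m) := hst i m (fun h => hmi h.symm) p hp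
    have h2 : α * dist q (c m) < dist q (c i) := hst m i hmi q hm
    have t1 : dist p (c m) ≤ dist p q + dist q (c m) := dist_triangle _ _ _
    have t2 : dist q (c i) ≤ dist q p + dist p (c i) := dist_triangle _ _ _
    have e1 : dist (c i) p = dist p (c i) := dist_comm _ _
    have e2 : dist q p = dist p q := dist_comm _ _
    nlinarith [dist_nonneg (x := p) (y := c i), dist_nonneg (x := p) (y := q),
      dist_nonneg (x := q) (y := c m), mul_lt_mul_of_pos_left h1 hα0]
  -- construct B : the cluster containing (c i if c i ∉ A, else some point of C i \ A)
  obtain ⟨x₁, hx₁Ci, hx₁A, hx₁c⟩ : ∃ x₁, x₁ ∈ C i ∧ x₁ ∉ A ∧ (c i ∈ A ∨ x₁ = c i) := by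
    by_cases h : c i ∈ A
    · exact ⟨x₀, hx₀Ci, hx₀A, Or.inl h⟩
    · exact ⟨c i, hcC i, h, Or.inr rfl⟩
  obtain ⟨B, ⟨hBP, hx₁B⟩, hBuniq⟩ := hPpart x₁
  obtain ⟨U, hU, hUuniq⟩ := hPpart a₀
  have hABne : A ≠ B := by
    intro h
    exact hx₁A (h ▸ hx₁B)
  have hBCi : B ⊆ C i := by
    rcases hlam B hBP i with h | h | h
    · exact h
    · exfalso
      have h1 : A = U := hUuniq A ⟨hA, ha₀⟩
      have h2 : B = U := hUuniq B ⟨hBP, h ha₀Ci⟩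
      exact hABne (h1.trans h2.symm)
    · exact absurd hx₁Ci (Finset.disjoint_left.mp h hx₁B)
  have hBsub : B ⊆ C i \ A := by
    intro y hy
    refine Finset.mem_sdiff.mpr ⟨hBCi hy, fun hyA => ?_⟩
    obtain ⟨V, hV, hVuniq⟩ := hPpart y
    have h1 : A = V := hVuniq A ⟨hA, hyA⟩
    have h2 : B = V := hVuniq B ⟨hBP, hy⟩
    exact hABne (h1.trans h2.symm)
  -- the (A, B) closure witness at radius dist qs (c i)
  have hciAB : c i ∈ A ∪ B := by
    rcases hx₁c with h | h
    · exact Finset.mem_union_left _ h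
    · exact Finset.mem_union_right _ (h ▸ hx₁B)
  have hwitAB : ClosureWitness dist A B (dist qs (c i)) := by
    refine ⟨hri0, c i, hciAB, ?_, ?_⟩
    · intro p hp
      rcases Finset.mem_union.mp hp with h | h
      · exact hmax p (hAsub h)
      · exact hmax p (hBCi h)
    · intro p q hp hq
      exact hcc p (hball p hp) q hq
  have hub : closureDist dist A B ≤ dist qs (c i) :=
    csInf_le ⟨0, fun r hr => hr.1⟩ hwitAB
  -- lower bound: every (A, A') witness exceeds some pairwise distance > radius
  have hlow : ∀ r, ClosureWitness dist A A' r →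
      ∃ x y : S, dist qs (c i) < dist x y ∧ dist x y ≤ r := by
    rintro r ⟨hr0, c', hc'mem, hcov, hsep⟩
    rcases Finset.mem_union.mp hc'mem with hc'A | hc'A'
    · -- center in A ⊆ C i; then c j is in the ball
      have hc'Ci : c' ∈ C i := hAsub hc'A
      have hyr : dist a₀' c' ≤ r := hcov a₀' (Finset.mem_union_right _ ha₀')
      have hcj : dist (c j₀) c' ≤ r :=
        hkey r c' i j₀ (fun h => hj₀ h.symm) hc'Ci a₀' ha₀'j₀ hyr hsep
      refine ⟨c', c j₀, hgap i j₀ (fun h => hj₀ h.symm) c' hc'Ci (hcicj j₀ hj₀), ?_⟩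
      rw [dist_comm]; exact hcj
    · -- center in A' ⊆ other clusters; then c i is in the ball
      obtain ⟨j, hj, hc'j⟩ := hA'cl c' hc'A'
      have hyr : dist a₀ c' ≤ r := hcov a₀ (Finset.mem_union_left _ ha₀)
      have hci : dist (c i) c' ≤ r := hkey r c' j i hj hc'j a₀ ha₀Ci hyr hsep
      have hR : (α - 1) * dist qs (c i) < dist (c j) (c i) := by
        rw [dist_comm (c j) (c i)]; exact hcicj j hj
      refine ⟨c', c i, hgap j i hj c' hc'j hR, ?_⟩
      rw [dist_comm]; exact hci
  -- nonemptiness of the (A, A') witness set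
  have hWne : {r : ℝ | ClosureWitness dist A A' r}.Nonempty := by
    obtain ⟨z, -, hz⟩ := Finset.exists_max_image (Finset.univ : Finset S)
      (fun p => dist p a₀) ⟨a₀, Finset.mem_univ _⟩
    exact ⟨dist z a₀, dist_nonneg, a₀, Finset.mem_union_left _ ha₀,
      fun p _ => hz p (Finset.mem_univ _),
      fun p q _ hq => absurd (hz q (Finset.mem_univ _)) hq⟩
  -- finite set of pairwise distances exceeding the radius
  set G : Finset ℝ := ((Finset.univ : Finset (S × S)).image fun p => dist p.1 p.2).filter
    (fun t => dist qs (c i) < t) with hG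
  have hGne : G.Nonempty := by
    refine ⟨dist qs (c j₀), Finset.mem_filter.mpr ⟨Finset.mem_image.mpr
      ⟨(qs, c j₀), Finset.mem_univ _, rfl⟩, ?_⟩⟩
    have h1 : α * dist qs (c i) < dist qs (c j₀) := hst i j₀ (fun h => hj₀ h.symm) qs hqsCi
    nlinarith
  have hm1 : dist qs (c i) < G.min' hGne := (Finset.mem_filter.mp (G.min'_mem hGne)).2
  have hm2 : ∀ r ∈ {r : ℝ | ClosureWitness dist A A' r}, G.min' hGne ≤ r := by
    intro r hr
    obtain ⟨x, y, h1, h2⟩ := hlow r hr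
    have hxy : dist x y ∈ G := Finset.mem_filter.mpr
      ⟨Finset.mem_image.mpr ⟨(x, y), Finset.mem_univ _, rfl⟩, h1⟩
    exact le_trans (Finset.min'_le G _ hxy) h2
  have hlb : G.min' hGne ≤ closureDist dist A A' := le_csInf hWne hm2
  exact ⟨B, hBP, hBsub, lt_of_le_of_lt hub (lt_of_lt_of_le hm1 hlb)⟩
end

section
/- For any α > 1 and ε < 1/5, there exists an (α,ε)-perturbation resilient 2-median instance on n points whose optimal clustering has exactly εn bad points, where a point p ∈ C_i is bad if α·d(p,c_i) ≥ d(p,c_j) for some j ≠ i. -/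
/-- k-median cost of a clustering `P` with centers `c` under distance function `d`. -/
def kmedCost {S : Type*} (d : S → S → ℝ) {k : ℕ} (P : Fin k → Finset S) (c : Fin k → S) : ℝ :=
  ∑ i, ∑ p ∈ P i, d p (c i)

/-- `(P, c)` is an optimal k-median clustering under `d`. -/
def IsOptimalKMed {S : Type*} (d : S → S → ℝ) {k : ℕ} (P : Fin k → Finset S)
    (c : Fin k → S) : Prop :=
  IsPartition P ∧ ∀ (Q : Fin k → Finset S) (b : Fin k → S), IsPartition Q →
    kmedCost d P c ≤ kmedCost d Q b

/-- (α, ε)-perturbation resilience for k-median: every optimal clustering under any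
α-perturbation `d'` of `d` is ε-close to `C`. -/
def APerturbResilient {S : Type*} [Fintype S] [DecidableEq S] (d : S → S → ℝ)
    (α ε : ℝ) {k : ℕ} (C : Fin k → Finset S) : Prop :=
  ∀ d' : S → S → ℝ, (∀ p q : S, d p q ≤ d' p q ∧ d' p q ≤ α * d p q) →
    ∀ (P : Fin k → Finset S) (c' : Fin k → S), IsOptimalKMed d' P c' →
      ∃ σ : Equiv.Perm (Fin k),
        (∑ i, (((C i) \ (P (σ i))).card : ℝ)) ≤ ε * (Fintype.card S)


namespace S7

/-- the distance: two tight clusters `{p : p.1 ≤ m}` (with hub `0`) and `{p : m < p.1}`. -/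
def dd (α δ : ℝ) (m : ℕ) {n : ℕ} (p q : Fin n) : ℝ :=
  if p.1 = q.1 then 0
  else if p.1 ≤ m ∧ q.1 ≤ m then 1
  else if m < p.1 ∧ m < q.1 then δ
  else if p.1 = 0 ∨ q.1 = 0 then 1 + α
  else α

variable {α δ : ℝ} {m n : ℕ}

lemma dd_self (p : Fin n) : dd α δ m p p = 0 := by simp [dd]

lemma dd_comm (p q : Fin n) : dd α δ m p q = dd α δ m q p := by
  unfold dd
  split_ifs <;> first | rfl | (exfalso; omega)

lemma dd_pos (hα : 1 < α) (hδ0 : 0 < δ) {p q : Fin n} (h : p ≠ q) :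
    0 < dd α δ m p q := by
  have hv : p.1 ≠ q.1 := fun hv => h (Fin.ext hv)
  unfold dd
  split_ifs <;> first | (exfalso; omega) | linarith

lemma dd_nonneg (hα : 1 < α) (hδ0 : 0 < δ) (p q : Fin n) : 0 ≤ dd α δ m p q := by
  rcases eq_or_ne p q with rfl | h
  · simp [dd_self]
  · exact (dd_pos hα hδ0 h).le

set_option maxHeartbeats 2000000 in
lemma dd_tri (hα : 1 < α) (hδ0 : 0 < δ) (hδ1 : δ < 1) (p q r : Fin n) :
    dd α δ m p r ≤ dd α δ m p q + dd α δ m q r := by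
  unfold dd
  split_ifs <;> first | (exfalso; omega) | linarith

lemma dd_AA {p q : Fin n} (hp : p.1 ≤ m) (hq : q.1 ≤ m) (h : p ≠ q) :
    dd α δ m p q = 1 := by
  have hv : p.1 ≠ q.1 := fun hv => h (Fin.ext hv)
  unfold dd; split_ifs <;> first | rfl | (exfalso; omega)

lemma dd_AA_le (hα : 1 < α) (hδ0 : 0 < δ) {p q : Fin n} (hp : p.1 ≤ m) (hq : q.1 ≤ m) :
    dd α δ m p q ≤ 1 := by
  rcases eq_or_ne p q with rfl | h
  · simp [dd_self]
  · rw [dd_AA hp hq h]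

lemma dd_BB {p q : Fin n} (hp : m < p.1) (hq : m < q.1) (h : p ≠ q) :
    dd α δ m p q = δ := by
  have hv : p.1 ≠ q.1 := fun hv => h (Fin.ext hv)
  unfold dd; split_ifs <;> first | rfl | (exfalso; omega)

lemma dd_BB_le (hδ0 : 0 < δ) {p q : Fin n} (hp : m < p.1) (hq : m < q.1) :
    dd α δ m p q ≤ δ := by
  rcases eq_or_ne p q with rfl | h
  · simpa [dd_self] using hδ0.le
  · rw [dd_BB hp hq h]

lemma dd_cross_ge (hα : 1 < α) {p q : Fin n} (hp : p.1 ≤ m) (hq : m < q.1) :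
    α ≤ dd α δ m p q := by
  unfold dd; split_ifs <;> first | (exfalso; omega) | linarith

lemma dd_hub {p q : Fin n} (hp : p.1 = 0) (hq : m < q.1) :
    dd α δ m p q = 1 + α := by
  unfold dd; split_ifs <;> first | rfl | (exfalso; omega)

end S7

namespace S7
open Finset

variable {α δ : ℝ} {m n : ℕ}

def AA (m n : ℕ) : Finset (Fin n) := univ.filter (fun p => p.1 ≤ m)
def BB (m n : ℕ) : Finset (Fin n) := univ.filter (fun p => ¬ p.1 ≤ m)
def CC (m n : ℕ) : Fin 2 → Finset (Fin n) := fun i => if i = 0 then AA m n else BB m n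

@[simp] lemma mem_AA {p : Fin n} : p ∈ AA m n ↔ p.1 ≤ m := by simp [AA]
@[simp] lemma mem_BB {p : Fin n} : p ∈ BB m n ↔ m < p.1 := by simp [BB]
@[simp] lemma CC_zero : CC m n 0 = AA m n := rfl
@[simp] lemma CC_one : CC m n 1 = BB m n := rfl

lemma card_AA (h : m + 1 ≤ n) : (AA m n).card = m + 1 := by
  have : AA m n = (Finset.range (m+1)).attachFin
      (fun x hx => lt_of_lt_of_le (Finset.mem_range.mp hx) h) := by
    ext p; simp [Finset.mem_attachFin, Nat.lt_succ_iff]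
  rw [this, Finset.card_attachFin, Finset.card_range]

lemma card_BB : (BB m n).card = n - (m + 1) := by
  have : BB m n = (Finset.Ico (m+1) n).attachFin
      (fun x hx => (Finset.mem_Ico.mp hx).2) := by
    ext p; simp [Finset.mem_attachFin, Nat.succ_le_iff]
  rw [this, Finset.card_attachFin, Nat.card_Ico]

lemma fin2_cases (j : Fin 2) : j = 0 ∨ j = 1 := by
  rcases j with ⟨v, hv⟩
  interval_cases v
  · exact Or.inl rfl
  · exact Or.inr rfl

lemma partitionCC : IsPartition (CC m n) := by
  intro x
  by_cases hx : x.1 ≤ m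
  · refine ⟨0, by simpa using hx, fun j hj => ?_⟩
    rcases fin2_cases j with rfl | rfl
    · rfl
    · rw [CC_one, mem_BB] at hj; omega
  · refine ⟨1, by simp; omega, fun j hj => ?_⟩
    rcases fin2_cases j with rfl | rfl
    · rw [CC_zero, mem_AA] at hj; omega
    · rfl

lemma partition_union {Q : Fin 2 → Finset (Fin n)} (hQ : IsPartition Q) :
    Q 0 ∪ Q 1 = univ ∧ Disjoint (Q 0) (Q 1) := by
  constructor
  · ext x
    simp only [Finset.mem_union, Finset.mem_univ, iff_true]
    obtain ⟨i, hi, -⟩ := hQ x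
    fin_cases i
    · exact Or.inl hi
    · exact Or.inr hi
  · rw [Finset.disjoint_left]
    intro x h0 h1
    obtain ⟨i, -, hu⟩ := hQ x
    have e0 := hu 0 h0
    have e1 := hu 1 h1
    rw [← e1] at e0
    exact absurd e0 (by decide)

lemma sum_part {Q : Fin 2 → Finset (Fin n)} (hQ : IsPartition Q) (f : Fin n → ℝ) :
    ∑ i, ∑ p ∈ Q i, f p = ∑ p, f p := by
  obtain ⟨hu, hd⟩ := partition_union hQ
  rw [Fin.sum_univ_two, ← Finset.sum_union hd, hu]

lemma cost_ge_mu (d'' : Fin n → Fin n → ℝ) {Q : Fin 2 → Finset (Fin n)} {b : Fin 2 → Fin n}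
    (hQ : IsPartition Q) :
    ∑ p, min (d'' p (b 0)) (d'' p (b 1)) ≤ kmedCost d'' Q b := by
  rw [← sum_part hQ (fun p => min (d'' p (b 0)) (d'' p (b 1)))]
  unfold kmedCost
  rw [Fin.sum_univ_two, Fin.sum_univ_two]
  gcongr with p hp p hp
  · exact min_le_left _ _
  · exact min_le_right _ _

end S7

namespace S7
open Finset

variable {α δ : ℝ} {m n : ℕ}

lemma dd_cross {p q : Fin n} (hp : p.1 ≤ m) (hp0 : p.1 ≠ 0) (hq : m < q.1) :
    dd α δ m p q = α := by
  unfold dd; split_ifs <;> first | rfl | (exfalso; omega)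

lemma sum_center {s : Finset (Fin n)} {x : Fin n} (hx : x ∈ s) {f : Fin n → ℝ} {v : ℝ}
    (h0 : f x = 0) (h1 : ∀ p ∈ s.erase x, f p = v) :
    ∑ p ∈ s, f p = ((s.card - 1 : ℕ) : ℝ) * v := by
  rw [← Finset.sum_erase_add _ _ hx, h0, add_zero, Finset.sum_congr rfl h1,
    Finset.sum_const, Finset.card_erase_of_mem hx, nsmul_eq_mul]

lemma sumA_eq (h : m + 1 ≤ n) {c0 : Fin n} (hc0 : c0.1 = 0) :
    ∑ p ∈ AA m n, dd α δ m p c0 = (m : ℝ) := by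
  have hx : c0 ∈ AA m n := mem_AA.mpr (by omega)
  rw [sum_center (f := fun p => dd α δ m p c0) hx (dd_self c0)
    (fun p hp => dd_AA (mem_AA.mp (Finset.mem_of_mem_erase hp))
      (by omega) (Finset.ne_of_mem_erase hp)), card_AA h]
  simp

lemma sumB_eq {H : ℕ} (hn : n = m + 2 + H) {c1 : Fin n} (hc1 : c1.1 = m + 1) :
    ∑ p ∈ BB m n, dd α δ m p c1 = (H : ℝ) * δ := by
  have hx : c1 ∈ BB m n := mem_BB.mpr (by omega)
  rw [sum_center (f := fun p => dd α δ m p c1) hx (dd_self c1)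
    (fun p hp => dd_BB (mem_BB.mp (Finset.mem_of_mem_erase hp))
      (by omega) (Finset.ne_of_mem_erase hp)), card_BB]
  congr 1
  have : n - (m + 1) - 1 = H := by omega
  rw [this]

lemma min_dd_nonneg (hα : 1 < α) (hδ0 : 0 < δ) (p b0 b1 : Fin n) :
    0 ≤ min (dd α δ m p b0) (dd α δ m p b1) :=
  le_min (dd_nonneg hα hδ0 _ _) (dd_nonneg hα hδ0 _ _)

lemma mu_split (b0 b1 : Fin n) :
    ∑ p, min (dd α δ m p b0) (dd α δ m p b1)
      = ∑ p ∈ AA m n, min (dd α δ m p b0) (dd α δ m p b1)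
        + ∑ p ∈ BB m n, min (dd α δ m p b0) (dd α δ m p b1) := by
  simp only [AA, BB]
  exact (Finset.sum_filter_add_sum_filter_not univ (fun p : Fin n => p.1 ≤ m) _).symm

lemma mu_mixed {H : ℕ} (hα : 1 < α) (hδ0 : 0 < δ) (hδ1 : δ < 1) (hn : n = m + 2 + H)
    {b0 b1 : Fin n} (hb0 : b0.1 ≤ m) (hb1 : m < b1.1) :
    (m : ℝ) + H * δ ≤ ∑ p, min (dd α δ m p b0) (dd α δ m p b1) := by
  rw [mu_split]
  have hb0A : b0 ∈ AA m n := mem_AA.mpr hb0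
  have hb1B : b1 ∈ BB m n := mem_BB.mpr hb1
  have hA : (m : ℝ) ≤ ∑ p ∈ AA m n, min (dd α δ m p b0) (dd α δ m p b1) := by
    have h1 : ∀ p ∈ (AA m n).erase b0, (1:ℝ) ≤ min (dd α δ m p b0) (dd α δ m p b1) := by
      intro p hp
      refine le_min ?_ ?_
      · rw [dd_AA (mem_AA.mp (Finset.mem_of_mem_erase hp)) hb0 (Finset.ne_of_mem_erase hp)]
      · exact le_trans hα.le (dd_cross_ge hα (mem_AA.mp (Finset.mem_of_mem_erase hp)) hb1)
    calc (m : ℝ) = ((AA m n).erase b0).card * 1 := by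
          rw [Finset.card_erase_of_mem hb0A, card_AA (by omega)]; simp
      _ ≤ ∑ p ∈ (AA m n).erase b0, min (dd α δ m p b0) (dd α δ m p b1) := by
          rw [mul_one]
          calc ((((AA m n).erase b0).card : ℝ)) = ∑ _p ∈ (AA m n).erase b0, (1:ℝ) := by simp
            _ ≤ _ := Finset.sum_le_sum h1
      _ ≤ _ := Finset.sum_le_sum_of_subset_of_nonneg (Finset.erase_subset _ _)
          (fun p _ _ => min_dd_nonneg hα hδ0 p b0 b1)
  have hB : (H : ℝ) * δ ≤ ∑ p ∈ BB m n, min (dd α δ m p b0) (dd α δ m p b1) := by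
    have h1 : ∀ p ∈ (BB m n).erase b1, δ ≤ min (dd α δ m p b0) (dd α δ m p b1) := by
      intro p hp
      refine le_min ?_ ?_
      · rw [dd_comm]
        exact le_trans (by linarith) (dd_cross_ge hα hb0 (mem_BB.mp (Finset.mem_of_mem_erase hp)))
      · rw [dd_BB (mem_BB.mp (Finset.mem_of_mem_erase hp)) hb1 (Finset.ne_of_mem_erase hp)]
    calc (H : ℝ) * δ = ((BB m n).erase b1).card * δ := by
          rw [Finset.card_erase_of_mem hb1B, card_BB]
          congr 2
          omega
      _ ≤ ∑ p ∈ (BB m n).erase b1, min (dd α δ m p b0) (dd α δ m p b1) := by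
          calc ((((BB m n).erase b1).card : ℝ)) * δ = ∑ _p ∈ (BB m n).erase b1, δ := by
                rw [Finset.sum_const, nsmul_eq_mul]
            _ ≤ _ := Finset.sum_le_sum h1
      _ ≤ _ := Finset.sum_le_sum_of_subset_of_nonneg (Finset.erase_subset _ _)
          (fun p _ _ => min_dd_nonneg hα hδ0 p b0 b1)
  linarith

lemma mu_same {H : ℕ} (hα : 1 < α) (hδ0 : 0 < δ) (hδ1 : δ < 1) (hn : n = m + 2 + H)
    (hHm : m ≤ H) (hδn : (n : ℝ) * δ ≤ 1)
    {b0 b1 : Fin n} (hsame : b0.1 ≤ m ↔ b1.1 ≤ m) :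
    α * ((m : ℝ) + H * δ) < ∑ p, min (dd α δ m p b0) (dd α δ m p b1) := by
  have hHn : (H : ℝ) < n := by exact_mod_cast (by omega : H < n)
  have hHδ : (H : ℝ) * δ < 1 := by nlinarith
  have hα0 : (0:ℝ) < α := by linarith
  rw [mu_split]
  by_cases hb : b0.1 ≤ m
  · have hb1 := hsame.mp hb
    have hB : ((H : ℝ) + 1) * α ≤ ∑ p ∈ BB m n, min (dd α δ m p b0) (dd α δ m p b1) := by
      have h1 : ∀ p ∈ BB m n, α ≤ min (dd α δ m p b0) (dd α δ m p b1) := by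
        intro p hp
        refine le_min ?_ ?_
        · rw [dd_comm]; exact dd_cross_ge hα hb (mem_BB.mp hp)
        · rw [dd_comm]; exact dd_cross_ge hα hb1 (mem_BB.mp hp)
      calc ((H : ℝ) + 1) * α = ((BB m n).card : ℝ) * α := by
            rw [card_BB]
            congr 2
            have : n - (m+1) = H + 1 := by omega
            rw [this]; push_cast; ring
        _ = ∑ _p ∈ BB m n, α := by rw [Finset.sum_const, nsmul_eq_mul]
        _ ≤ _ := Finset.sum_le_sum h1
    have hA : (0:ℝ) ≤ ∑ p ∈ AA m n, min (dd α δ m p b0) (dd α δ m p b1) :=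
      Finset.sum_nonneg (fun p _ => min_dd_nonneg hα hδ0 p b0 b1)
    have hmH : (m:ℝ) ≤ (H:ℝ) := Nat.cast_le.mpr hHm
    have key : α * ((m : ℝ) + H * δ) < ((H : ℝ) + 1) * α := by
      have h2 : (m:ℝ) + H * δ < (H:ℝ) + 1 := by linarith
      have := mul_lt_mul_of_pos_left h2 hα0
      linarith [mul_comm α ((H:ℝ) + 1)]
    linarith
  · have hb1 : ¬ b1.1 ≤ m := fun h => hb (hsame.mpr h)
    have hA : ((m : ℝ) + 1) * α ≤ ∑ p ∈ AA m n, min (dd α δ m p b0) (dd α δ m p b1) := by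
      have h1 : ∀ p ∈ AA m n, α ≤ min (dd α δ m p b0) (dd α δ m p b1) := by
        intro p hp
        refine le_min ?_ ?_
        · exact dd_cross_ge hα (mem_AA.mp hp) (by omega)
        · exact dd_cross_ge hα (mem_AA.mp hp) (by omega)
      calc ((m : ℝ) + 1) * α = ((AA m n).card : ℝ) * α := by
            rw [card_AA (by omega)]; push_cast; ring
        _ = ∑ _p ∈ AA m n, α := by rw [Finset.sum_const, nsmul_eq_mul]
        _ ≤ _ := Finset.sum_le_sum h1
    have hB : (0:ℝ) ≤ ∑ p ∈ BB m n, min (dd α δ m p b0) (dd α δ m p b1) :=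
      Finset.sum_nonneg (fun p _ => min_dd_nonneg hα hδ0 p b0 b1)
    have key : α * ((m : ℝ) + H * δ) < ((m : ℝ) + 1) * α := by
      have h2 : (m:ℝ) + H * δ < (m:ℝ) + 1 := by linarith
      have := mul_lt_mul_of_pos_left h2 hα0
      linarith [mul_comm α ((m:ℝ) + 1)]
    linarith

end S7

namespace S7
open Finset

variable {n : ℕ}

lemma fin2_resolve : ∀ i j k : Fin 2, i ≠ j → k ≠ i → k = j := by decide

lemma fin2_univ_pair : ∀ i j : Fin 2, i ≠ j → (univ : Finset (Fin 2)) = {i, j} := by decide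

lemma voronoi {d'' : Fin n → Fin n → ℝ} {P : Fin 2 → Finset (Fin n)} {c' : Fin 2 → Fin n}
    (hopt : IsOptimalKMed d'' P c') {i j : Fin 2} (hij : i ≠ j) {x : Fin n} (hx : x ∈ P i) :
    d'' x (c' i) ≤ d'' x (c' j) := by
  have hP := hopt.1
  have hxj : x ∉ P j := by
    intro h
    obtain ⟨u, hu, hun⟩ := hP x
    exact hij ((hun i hx).trans (hun j h).symm)
  set Q : Fin 2 → Finset (Fin n) := fun k => if k = i then (P i).erase x else insert x (P j)
    with hQdef
  have hQi : Q i = (P i).erase x := if_pos rfl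
  have hQj : Q j = insert x (P j) := if_neg (fun h => hij h.symm)
  have hQpart : IsPartition Q := by
    intro y
    by_cases hy : y = x
    · subst hy
      refine ⟨j, by show y ∈ Q j; rw [hQj]; exact Finset.mem_insert_self _ _, fun k hk => ?_⟩
      by_cases hki : k = i
      · subst hki
        replace hk : y ∈ Q k := hk
        rw [hQi] at hk
        exact absurd hk (Finset.notMem_erase _ _)
      · exact fin2_resolve i j k hij hki
    · obtain ⟨u, hu, hun⟩ := hP y
      have hmem : ∀ k : Fin 2, y ∈ Q k ↔ y ∈ P k := by
        intro k
        by_cases hki : k = i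
        · subst hki; rw [hQi, Finset.mem_erase]; exact ⟨fun h => h.2, fun h => ⟨hy, h⟩⟩
        · rw [fin2_resolve i j k hij hki, hQj, Finset.mem_insert]
          exact ⟨fun h => h.resolve_left hy, fun h => Or.inr h⟩
      exact ⟨u, (hmem u).mpr hu, fun k hk => hun k ((hmem k).mp hk)⟩
  have hcost := hopt.2 Q c' hQpart
  have hcQ : kmedCost d'' Q c'
      = kmedCost d'' P c' - d'' x (c' i) + d'' x (c' j) := by
    unfold kmedCost
    rw [fin2_univ_pair i j hij, Finset.sum_pair hij, Finset.sum_pair hij, hQi, hQj,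
      Finset.sum_insert hxj]
    have := Finset.sum_erase_add (P i) (fun p => d'' p (c' i)) hx
    linarith
  rw [hcQ] at hcost
  linarith

end S7

/-- for any α > 1 and (rational) ε < 1/5, there is an (α, ε)-perturbation
resilient 2-median instance on n points with exactly εn bad points. -/
theorem stmt7 (α : ℝ) (hα : 1 < α) (ε : ℚ) (hε0 : 0 < ε) (hε : (ε : ℝ) < 1 / 5) :
    ∃ (n : ℕ) (S : Type) (fS : Fintype S) (eS : DecidableEq S) (d : S → S → ℝ),
      (∀ p : S, d p p = 0) ∧ (∀ p q : S, p ≠ q → 0 < d p q) ∧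
      (∀ p q : S, d p q = d q p) ∧ (∀ p q r : S, d p r ≤ d p q + d q r) ∧
      @Fintype.card S fS = n ∧
      ∃ (C : Fin 2 → Finset S) (c : Fin 2 → S),
        IsOptimalKMed d C c ∧
        @APerturbResilient S fS eS d α (ε : ℝ) 2 C ∧
        ((Set.ncard {p : S | ∃ i, p ∈ C i ∧ ∃ j, j ≠ i ∧
            d (c j) p ≤ α * d (c i) p} : ℝ) = (ε : ℝ) * n) := by
  classical
  set m : ℕ := ε.num.toNat with hmdef
  set n : ℕ := ε.den with hndef
  have hnum : (0:ℤ) < ε.num := Rat.num_pos.mpr hε0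
  have hm1 : 1 ≤ m := by omega
  have hn0 : 0 < n := by rw [hndef]; exact ε.den_pos
  have hmr : (m:ℝ) = (ε.num : ℝ) := by
    have h := Int.toNat_of_nonneg hnum.le
    rw [hmdef]
    exact_mod_cast congrArg (Int.cast : ℤ → ℝ) h
  have hnr : (0:ℝ) < (n:ℝ) := by exact_mod_cast hn0
  have hεn : (ε:ℝ) * (n:ℝ) = (m:ℝ) := by
    rw [hmr, Rat.cast_def, ← hndef]
    field_simp
  have h5m : 5 * m < n := by
    have h2 := mul_lt_mul_of_pos_right hε hnr
    have h5r : 5 * (m:ℝ) < (n:ℝ) := by nlinarith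
    exact_mod_cast h5r
  obtain ⟨H, hnH⟩ : ∃ H, n = m + 2 + H := ⟨n - m - 2, by omega⟩
  have hHm : m ≤ H := by omega
  set δ : ℝ := (n:ℝ)⁻¹ with hδdef
  have hδ0 : 0 < δ := by rw [hδdef]; positivity
  have hδ1 : δ < 1 := by
    rw [hδdef]
    have h2 : (1:ℝ) < n := by exact_mod_cast (by omega : 1 < n)
    exact inv_lt_one_of_one_lt₀ h2
  have hδn : (n:ℝ) * δ ≤ 1 := by rw [hδdef, mul_inv_cancel₀ (ne_of_gt hnr)]
  refine ⟨n, Fin n, inferInstance, inferInstance, S7.dd α δ m, fun p => S7.dd_self p,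
    fun p q h => S7.dd_pos hα hδ0 h, fun p q => S7.dd_comm p q,
    fun p q r => S7.dd_tri hα hδ0 hδ1 p q r, Fintype.card_fin n, ?_⟩
  set c0 : Fin n := ⟨0, hn0⟩ with hc0def
  set c1 : Fin n := ⟨m+1, by omega⟩ with hc1def
  set cen : Fin 2 → Fin n := fun i => if i = 0 then c0 else c1 with hcendef
  have hcen0 : cen 0 = c0 := rfl
  have hcen1 : cen 1 = c1 := if_neg (by decide)
  have hc0v : c0.1 = 0 := rfl
  have hc1v : c1.1 = m + 1 := rfl
  have hcostCC : kmedCost (S7.dd α δ m) (S7.CC m n) cen = (m:ℝ) + (H:ℝ) * δ := by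
    unfold kmedCost
    rw [Fin.sum_univ_two, S7.CC_zero, S7.CC_one, hcen0, hcen1,
      S7.sumA_eq (by omega) hc0v, S7.sumB_eq hnH hc1v]
  refine ⟨S7.CC m n, cen, ⟨S7.partitionCC, ?_⟩, ?_, ?_⟩
  · -- optimality under dd
    intro Q b hQ
    rw [hcostCC]
    refine le_trans ?_ (S7.cost_ge_mu (S7.dd α δ m) hQ)
    by_cases h0 : (b 0).1 ≤ m <;> by_cases h1 : (b 1).1 ≤ m
    · have h := S7.mu_same hα hδ0 hδ1 hnH hHm hδn (b0 := b 0) (b1 := b 1) (iff_of_true h0 h1)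
      have hnn : (0:ℝ) ≤ (m:ℝ) + (H:ℝ)*δ := by positivity
      nlinarith
    · exact S7.mu_mixed hα hδ0 hδ1 hnH h0 (by omega)
    · calc (m:ℝ) + (H:ℝ)*δ ≤ ∑ p, min (S7.dd α δ m p (b 1)) (S7.dd α δ m p (b 0)) :=
          S7.mu_mixed hα hδ0 hδ1 hnH h1 (by omega)
        _ = _ := Finset.sum_congr rfl (fun p _ => min_comm _ _)
    · have h := S7.mu_same hα hδ0 hδ1 hnH hHm hδn (b0 := b 0) (b1 := b 1) (iff_of_false h0 h1)
      have hnn : (0:ℝ) ≤ (m:ℝ) + (H:ℝ)*δ := by positivity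
      nlinarith
  · -- resilience
    intro d' hband P c' hopt
    have hd'ge : ∀ p q, S7.dd α δ m p q ≤ d' p q := fun p q => (hband p q).1
    have hd'le : ∀ p q, d' p q ≤ α * S7.dd α δ m p q := fun p q => (hband p q).2
    have hcardn : (ε:ℝ) * (Fintype.card (Fin n)) = (m:ℝ) := by
      rw [Fintype.card_fin]; exact hεn
    have hcostle : kmedCost d' (S7.CC m n) cen ≤ α * ((m:ℝ) + (H:ℝ)*δ) := by
      unfold kmedCost
      rw [Fin.sum_univ_two, S7.CC_zero, S7.CC_one, hcen0, hcen1]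
      have hA : ∑ p ∈ S7.AA m n, d' p c0 ≤ α * (m:ℝ) := by
        calc ∑ p ∈ S7.AA m n, d' p c0 ≤ ∑ p ∈ S7.AA m n, α * S7.dd α δ m p c0 :=
            Finset.sum_le_sum (fun p _ => hd'le p c0)
          _ = α * ∑ p ∈ S7.AA m n, S7.dd α δ m p c0 := by rw [Finset.mul_sum]
          _ = α * (m:ℝ) := by rw [S7.sumA_eq (by omega) hc0v]
      have hB : ∑ p ∈ S7.BB m n, d' p c1 ≤ α * ((H:ℝ)*δ) := by
        calc ∑ p ∈ S7.BB m n, d' p c1 ≤ ∑ p ∈ S7.BB m n, α * S7.dd α δ m p c1 :=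
            Finset.sum_le_sum (fun p _ => hd'le p c1)
          _ = α * ∑ p ∈ S7.BB m n, S7.dd α δ m p c1 := by rw [Finset.mul_sum]
          _ = α * ((H:ℝ)*δ) := by rw [S7.sumB_eq hnH hc1v]
      linarith
    have hPC := hopt.2 (S7.CC m n) cen S7.partitionCC
    have key : ∀ i j : Fin 2, i ≠ j → (c' i).1 ≤ m → ¬ (c' j).1 ≤ m →
        c0 ∈ P i ∧ ∀ p : Fin n, m < p.1 → p ∈ P j := by
      intro i j hij hi hj
      constructor
      · obtain ⟨u, hu, hun⟩ := hopt.1 c0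
        have hui : u = i := by
          by_contra hne
          have huj : u = j := S7.fin2_resolve i j u hij hne
          subst huj
          have hv := S7.voronoi hopt (Ne.symm hij) hu
          have l1 : (1:ℝ) + α ≤ d' c0 (c' u) :=
            le_trans (le_of_eq (S7.dd_hub hc0v (by omega)).symm) (hd'ge _ _)
          have l2 : d' c0 (c' i) ≤ α * 1 :=
            le_trans (hd'le _ _) (mul_le_mul_of_nonneg_left
              (S7.dd_AA_le hα hδ0 (by omega) hi) (by linarith))
          linarith
        exact hui ▸ hu
      · intro p hp
        obtain ⟨u, hu, hun⟩ := hopt.1 p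
        have huj : u = j := by
          by_contra hne
          have hui : u = i := S7.fin2_resolve j i u (Ne.symm hij) hne
          subst hui
          have hv := S7.voronoi hopt hij hu
          have l1 : α ≤ d' p (c' u) := by
            refine le_trans ?_ (hd'ge _ _)
            rw [S7.dd_comm]
            exact S7.dd_cross_ge hα hi hp
          have l2 : d' p (c' j) ≤ α * δ :=
            le_trans (hd'le _ _) (mul_le_mul_of_nonneg_left
              (S7.dd_BB_le hδ0 hp (by omega)) (by linarith))
          nlinarith
        exact huj ▸ hu
    by_cases h0 : (c' 0).1 ≤ m <;> by_cases h1 : (c' 1).1 ≤ m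
    · exfalso
      have hmu := S7.mu_same hα hδ0 hδ1 hnH hHm hδn (b0 := c' 0) (b1 := c' 1) (iff_of_true h0 h1)
      have hmono : ∑ p, min (S7.dd α δ m p (c' 0)) (S7.dd α δ m p (c' 1))
          ≤ ∑ p, min (d' p (c' 0)) (d' p (c' 1)) :=
        Finset.sum_le_sum (fun p _ => min_le_min (hd'ge _ _) (hd'ge _ _))
      have hcg := S7.cost_ge_mu d' hopt.1 (b := c')
      linarith
    · -- c' 0 on A side, c' 1 on B side
      obtain ⟨hc0P, hBP⟩ := key 0 1 (by decide) h0 h1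
      refine ⟨Equiv.refl _, ?_⟩
      rw [Fin.sum_univ_two]
      simp only [Equiv.refl_apply, S7.CC_zero, S7.CC_one]
      have e1 : S7.BB m n \ P 1 = ∅ :=
        Finset.sdiff_eq_empty_iff_subset.mpr (fun p hp => hBP p (S7.mem_BB.mp hp))
      have e0 : (S7.AA m n \ P 0).card ≤ m := by
        have hsub : S7.AA m n \ P 0 ⊆ (S7.AA m n).erase c0 := by
          intro p hp
          rw [Finset.mem_sdiff] at hp
          refine Finset.mem_erase.mpr ⟨?_, hp.1⟩
          rintro rfl
          exact hp.2 hc0P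
        calc _ ≤ ((S7.AA m n).erase c0).card := Finset.card_le_card hsub
          _ = m := by
            rw [Finset.card_erase_of_mem (S7.mem_AA.mpr (by omega)), S7.card_AA (by omega)]
            omega
      rw [e1, hcardn]
      simp only [Finset.card_empty, Nat.cast_zero, add_zero]
      exact_mod_cast e0
    · -- c' 1 on A side, c' 0 on B side
      obtain ⟨hc0P, hBP⟩ := key 1 0 (by decide) h1 h0
      refine ⟨Equiv.swap 0 1, ?_⟩
      rw [Fin.sum_univ_two]
      simp only [Equiv.swap_apply_left, Equiv.swap_apply_right, S7.CC_zero, S7.CC_one]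
      have e1 : S7.BB m n \ P 0 = ∅ :=
        Finset.sdiff_eq_empty_iff_subset.mpr (fun p hp => hBP p (S7.mem_BB.mp hp))
      have e0 : (S7.AA m n \ P 1).card ≤ m := by
        have hsub : S7.AA m n \ P 1 ⊆ (S7.AA m n).erase c0 := by
          intro p hp
          rw [Finset.mem_sdiff] at hp
          refine Finset.mem_erase.mpr ⟨?_, hp.1⟩
          rintro rfl
          exact hp.2 hc0P
        calc _ ≤ ((S7.AA m n).erase c0).card := Finset.card_le_card hsub
          _ = m := by
            rw [Finset.card_erase_of_mem (S7.mem_AA.mpr (by omega)), S7.card_AA (by omega)]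
            omega
      rw [e1, hcardn]
      simp only [Finset.card_empty, Nat.cast_zero, add_zero]
      exact_mod_cast e0
    · exfalso
      have hmu := S7.mu_same hα hδ0 hδ1 hnH hHm hδn (b0 := c' 0) (b1 := c' 1) (iff_of_false h0 h1)
      have hmono : ∑ p, min (S7.dd α δ m p (c' 0)) (S7.dd α δ m p (c' 1))
          ≤ ∑ p, min (d' p (c' 0)) (d' p (c' 1)) :=
        Finset.sum_le_sum (fun p _ => min_le_min (hd'ge _ _) (hd'ge _ _))
      have hcg := S7.cost_ge_mu d' hopt.1 (b := c')
      linarith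
  · -- bad points
    have hbad : {p : Fin n | ∃ i, p ∈ S7.CC m n i ∧ ∃ j, j ≠ i ∧
        S7.dd α δ m (cen j) p ≤ α * S7.dd α δ m (cen i) p}
        = ↑((S7.AA m n).erase c0) := by
      ext p
      simp only [Set.mem_setOf_eq, Finset.coe_erase, Set.mem_diff, Finset.mem_coe,
        Set.mem_singleton_iff]
      constructor
      · rintro ⟨i, hpi, j, hji, hle⟩
        rcases S7.fin2_cases i with rfl | rfl <;> rcases S7.fin2_cases j with rfl | rfl
        · exact absurd rfl hji
        · -- i = 0, j = 1
          refine ⟨by simpa using hpi, ?_⟩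
          rintro rfl
          rw [hcen0, hcen1, S7.dd_self, mul_zero] at hle
          have hdd : S7.dd α δ m c1 c0 = 1 + α := by
            rw [S7.dd_comm]; exact S7.dd_hub hc0v (by omega)
          rw [hdd] at hle
          linarith
        · -- i = 1, j = 0
          exfalso
          have hp : m < p.1 := by
            have := hpi
            rw [S7.CC_one, S7.mem_BB] at this
            exact this
          rw [hcen0, hcen1] at hle
          have l1 : S7.dd α δ m c0 p = 1 + α := S7.dd_hub hc0v hp
          have l2 : S7.dd α δ m c1 p ≤ δ := S7.dd_BB_le hδ0 (by omega) hp
          have l3 : α * S7.dd α δ m c1 p ≤ α * δ :=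
            mul_le_mul_of_nonneg_left l2 (by linarith)
          nlinarith
        · exact absurd rfl hji
      · rintro ⟨hpA, hne⟩
        have hpm : p.1 ≤ m := by simpa using hpA
        refine ⟨0, by simpa using hpm, 1, by decide, ?_⟩
        have hp0 : p.1 ≠ 0 := by
          intro h
          exact hne (Fin.ext (by rw [h]))
        have l1 : S7.dd α δ m (cen 1) p = α := by
          rw [hcen1, S7.dd_comm]
          exact S7.dd_cross hpm hp0 (by omega)
        have l2 : S7.dd α δ m (cen 0) p = 1 := by
          rw [hcen0]
          exact S7.dd_AA (by omega) hpm (Ne.symm hne)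
        rw [l1, l2, mul_one]
    rw [hbad, Set.ncard_coe_finset,
      Finset.card_erase_of_mem (S7.mem_AA.mpr (by omega)), S7.card_AA (by omega),
      Nat.add_sub_cancel]
    exact hεn.symm
end

section
/- Suppose a clustering instance on n points is (α,ε)-perturbation resilient to k-median and min_i |C_i| > (2 + 2α/(α−1))εn + 2α(α+1)/(α−1). Then the number of bad points is at most εn, where p ∈ C_i is bad if there exists j ≠ i with α·d(c_i,p) ≥ d(c_j,p). -/
open Finset

section Helpers
set_option linter.unusedSectionVars false

variable {S : Type*} [Fintype S] [DecidableEq S] {k : ℕ}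

private lemma partition_sum {P : Fin k → Finset S} (hP : IsPartition P) (f : S → ℝ) :
    ∑ i, ∑ p ∈ P i, f p = ∑ p, f p := by
  classical
  choose g hg hu using hP
  have hfib : ∀ i, P i = univ.filter (fun q => g q = i) := by
    intro i
    ext q
    simp only [mem_filter, mem_univ, true_and]
    constructor
    · intro h; exact (hu q i h).symm
    · rintro rfl; exact hg q
  calc ∑ i, ∑ p ∈ P i, f p = ∑ i, ∑ p ∈ univ.filter (fun q => g q = i), f p := by
        exact Finset.sum_congr rfl fun i _ => by rw [hfib i]
    _ = ∑ p, f p := Finset.sum_fiberwise _ _ _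

private lemma sum_split2 (a b : Fin k) (hab : a ≠ b) (f : Fin k → ℝ) :
    ∑ v, f v = f a + f b + ∑ v ∈ (univ.erase a).erase b, f v := by
  have h1 : ∑ v ∈ (univ.erase a).erase b, f v + f b = ∑ v ∈ univ.erase a, f v :=
    Finset.sum_erase_add _ _ (Finset.mem_erase.2 ⟨hab.symm, mem_univ b⟩)
  have h2 : ∑ v ∈ univ.erase a, f v + f a = ∑ v, f v :=
    Finset.sum_erase_add _ _ (mem_univ a)
  linarith

private lemma center_swap {d : S → S → ℝ} {P : Fin k → Finset S} {b : Fin k → S}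
    (hmin : ∀ (Q : Fin k → Finset S) (e : Fin k → S), IsPartition Q →
      kmedCost d P b ≤ kmedCost d Q e)
    (hP : IsPartition P) (w : Fin k) (y : S) :
    ∑ q ∈ P w, d q (b w) ≤ ∑ q ∈ P w, d q y := by
  classical
  have h := hmin P (Function.update b w y) hP
  unfold kmedCost at h
  have hsplit : ∀ e : Fin k → S, (∑ i, ∑ p ∈ P i, d p (e i))
      = (∑ i ∈ univ.erase w, ∑ p ∈ P i, d p (e i)) + ∑ p ∈ P w, d p (e w) := by
    intro e
    rw [Finset.sum_erase_add univ _ (mem_univ w)]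
  rw [hsplit, hsplit] at h
  have hoff : (∑ i ∈ univ.erase w, ∑ p ∈ P i, d p (b i))
      = ∑ i ∈ univ.erase w, ∑ p ∈ P i, d p (Function.update b w y i) := by
    refine Finset.sum_congr rfl fun i hi => ?_
    rw [Function.update_of_ne (Finset.ne_of_mem_erase hi)]
  rw [← hoff, Function.update_self] at h
  linarith

/-- moving a point `q` from its cluster `a` to cluster `v` shows `d q (b a) ≤ d q (b v)`. -/
private lemma reassign_le {d : S → S → ℝ} {P : Fin k → Finset S} {b : Fin k → S}
    (hmin : ∀ (Q : Fin k → Finset S) (e : Fin k → S), IsPartition Q →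
      kmedCost d P b ≤ kmedCost d Q e)
    (hP : IsPartition P) {q : S} {a : Fin k} (hq : q ∈ P a)
    (v : Fin k) :
    d q (b a) ≤ d q (b v) := by
  classical
  have hqa : ∀ u, q ∈ P u → u = a := fun u hu => by
    obtain ⟨i0, _, hi0⟩ := hP q
    rw [hi0 u hu, hi0 a hq]
  by_cases hva : v = a
  · subst hva; exact le_refl _
  set Q : Fin k → Finset S := fun u =>
    if u = v then insert q (P v) else if u = a then (P a).erase q else P u with hQdef
  have hqPv : q ∉ P v := fun h => hva (hqa v h)
  have hmemQ : ∀ x, x ≠ q → ∀ u, (x ∈ Q u ↔ x ∈ P u) := by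
    intro x hx u
    by_cases h1 : u = v
    · subst h1; simp [hQdef, if_pos, hx]
    · by_cases h2 : u = a
      · subst h2; simp [hQdef, h1, hx]
      · simp [hQdef, h1, h2]
  have hQpart : IsPartition Q := by
    intro x
    by_cases hx : x = q
    · subst hx
      refine ⟨v, ?_, ?_⟩
      · simp [hQdef]
      · intro u hu
        by_cases h1 : u = v
        · exact h1
        · by_cases h2 : u = a
          · subst h2; simp [hQdef, h1] at hu
          · simp [hQdef, h1, h2] at hu
            exact absurd (hqa u hu) h2
    · obtain ⟨i0, hi0, hi0u⟩ := hP x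
      exact ⟨i0, (hmemQ x hx i0).2 hi0, fun u hu => hi0u u ((hmemQ x hx u).1 hu)⟩
  have h := hmin Q b hQpart
  unfold kmedCost at h
  have hsplitP := sum_split2 v a hva (fun i => ∑ p ∈ P i, d p (b i))
  have hsplitQ := sum_split2 v a hva (fun i => ∑ p ∈ Q i, d p (b i))
  have hoff : ∑ u ∈ (univ.erase v).erase a, (∑ p ∈ Q u, d p (b u))
      = ∑ u ∈ (univ.erase v).erase a, (∑ p ∈ P u, d p (b u)) := by
    refine Finset.sum_congr rfl fun u hu => ?_
    have h1 : u ≠ a := Finset.ne_of_mem_erase hu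
    have h2 : u ≠ v := Finset.ne_of_mem_erase (Finset.mem_of_mem_erase hu)
    simp [hQdef, h1, h2]
  have hQv : ∑ p ∈ Q v, d p (b v) = d q (b v) + ∑ p ∈ P v, d p (b v) := by
    simp only [hQdef, if_pos rfl]
    exact Finset.sum_insert hqPv
  have hQa : ∑ p ∈ Q a, d p (b a) + d q (b a) = ∑ p ∈ P a, d p (b a) := by
    have : Q a = (P a).erase q := by simp [hQdef, hva, Ne.symm]
    rw [this]
    exact Finset.sum_erase_add _ _ hq
  rw [hsplitP, hsplitQ, hoff, hQv] at h
  linarith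

private lemma exists_opt [Nonempty S] (d : S → S → ℝ) (P₀ : Fin k → Finset S)
    (h₀ : IsPartition P₀) :
    ∃ (P : Fin k → Finset S) (b : Fin k → S), IsOptimalKMed d P b := by
  classical
  let Ω : Finset ((Fin k → Finset S) × (Fin k → S)) :=
    univ.filter (fun pc => IsPartition pc.1)
  have hne : Ω.Nonempty := ⟨(P₀, fun _ => Classical.arbitrary S), by simp [Ω, h₀]⟩
  obtain ⟨pc, hmem, hmin⟩ := Ω.exists_min_image (fun pc => kmedCost d pc.1 pc.2) hne
  refine ⟨pc.1, pc.2, (Finset.mem_filter.1 hmem).2, fun Q e hQ => ?_⟩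
  exact hmin (Q, e) (by simp [Ω, hQ])

end Helpers

set_option maxHeartbeats 1600000 in
/-- under (α, ε)-perturbation resilience and the cluster-size lower bound,
there are at most εn bad points. -/
theorem stmt8 {S : Type*} [MetricSpace S] [Fintype S] [DecidableEq S] {k : ℕ}
    {α ε : ℝ} (hα : 1 < α) (hε : 0 ≤ ε)
    (C : Fin k → Finset S) (c : Fin k → S)
    (hopt : IsOptimalKMed dist C c)
    (hres : APerturbResilient dist α ε C)
    (hsize : ∀ i, (2 + 2 * α / (α - 1)) * ε * (Fintype.card S) +
      2 * α * (α + 1) / (α - 1) < ((C i).card : ℝ)) :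
    (Set.ncard {p : S | ∃ i, p ∈ C i ∧ ∃ j, j ≠ i ∧
        dist (c j) p ≤ α * dist (c i) p} : ℝ) ≤ ε * (Fintype.card S) := by
  classical
  by_contra hcon
  push_neg at hcon
  set Bad : Set S := {p : S | ∃ i, p ∈ C i ∧ ∃ j, j ≠ i ∧
      dist (c j) p ≤ α * dist (c i) p} with hBadDef
  set E : ℝ := ε * (Fintype.card S) with hEdef
  have hE0 : 0 ≤ E := mul_nonneg hε (Nat.cast_nonneg _)
  have hα0 : (0:ℝ) < α := lt_trans one_pos hα
  have hβ : (0:ℝ) < α - 1 := by linarith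
  -- the bad set as a finset
  have hBadfin : Bad.Finite := Set.toFinite _
  have hncard : (Set.ncard Bad : ℝ) = (hBadfin.toFinset.card : ℝ) := by
    rw [Set.ncard_eq_toFinset_card Bad hBadfin]
  rw [hncard] at hcon
  -- choose B' of size m
  set m : ℕ := ⌊E⌋₊ + 1 with hmdef
  have hEm : E < (m:ℝ) := by
    rw [hmdef]; push_cast; exact Nat.lt_floor_add_one E
  have hmE1 : (m:ℝ) ≤ E + 1 := by
    rw [hmdef]; push_cast
    have := Nat.floor_le hE0
    linarith
  have hmcard : m ≤ hBadfin.toFinset.card := by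
    by_contra h
    push_neg at h
    have : (hBadfin.toFinset.card : ℝ) ≤ (⌊E⌋₊ : ℝ) := by
      have : hBadfin.toFinset.card ≤ ⌊E⌋₊ := by omega
      exact_mod_cast this
    have h2 : (⌊E⌋₊ : ℝ) ≤ E := Nat.floor_le hE0
    linarith
  obtain ⟨B', hB'sub, hB'card⟩ := Finset.exists_subset_card_eq hmcard
  have hB'bad : ∀ p ∈ B', p ∈ Bad := fun p hp => (Set.Finite.mem_toFinset hBadfin).1 (hB'sub hp)
  -- cluster index function
  obtain ⟨hPC, hCmin⟩ := hopt
  choose idx hmem huniq using hPC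
  have hPC : IsPartition C := fun x => ⟨idx x, hmem x, fun y hy => huniq x y hy⟩
  -- witness centers for bad points
  have hbadall : ∀ p ∈ B', ∃ jj, jj ≠ idx p ∧ dist (c jj) p ≤ α * dist (c (idx p)) p := by
    intro p hp
    obtain ⟨i, hpi, jj, hji, hd⟩ := hB'bad p hp
    have hi : i = idx p := huniq p i hpi
    subst hi
    exact ⟨jj, hji, hd⟩
  choose jw hjw1 hjw2 using hbadall
  set jx : S → Fin k := fun q => if h : q ∈ B' then jw q h else idx q with hjxdef
  have hjxnB : ∀ p, p ∉ B' → jx p = idx p := fun p h => dif_neg h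
  have hjxne : ∀ p ∈ B', jx p ≠ idx p := fun p h => by
    simp only [hjxdef, dif_pos h]; exact hjw1 p h
  have hthale : ∀ q, dist q (c (jx q)) ≤ α * dist q (c (idx q)) := by
    intro q
    by_cases h : q ∈ B'
    · simp only [hjxdef, dif_pos h]
      rw [dist_comm q (c (jw q h)), dist_comm q (c (idx q))]
      exact hjw2 q h
    · simp only [hjxdef, dif_neg h]
      have := dist_nonneg (x := q) (y := c (idx q))
      nlinarith
  -- Voronoi property
  have hvor : ∀ (q : S) (v : Fin k), dist q (c (idx q)) ≤ dist q (c v) :=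
    fun q v => reassign_le hCmin hPC (hmem q) v
  -- disjointness of clusters
  have hCdisj : ∀ (u v : Fin k) (x : S), u ≠ v → x ∈ C u → x ∉ C v := by
    intro u v x huv hxu hxv
    exact huv ((huniq x u hxu).trans (huniq x v hxv).symm)
  -- numeric: every cluster is larger than 2E+1
  have h2E1 : ∀ w, 2*E + 1 < ((C w).card : ℝ) := by
    intro w
    have h := hsize w
    rw [mul_assoc, ← hEdef] at h
    have hc1 : (2:ℝ) ≤ 2*α*(α+1)/(α-1) := by
      rw [le_div_iff₀ hβ]; nlinarith
    have hc2 : 2*E ≤ (2 + 2*α/(α-1)) * E := by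
      have h3 : (0:ℝ) ≤ 2*α/(α-1) := by positivity
      nlinarith
    linarith
  -- distinct centers
  have hcc : ∀ a b : Fin k, a ≠ b → c a ≠ c b := by
    intro a b hab hcab
    set Q : Fin k → Finset S := fun u =>
      if u = a then C a ∪ C b else if u = b then (∅ : Finset S) else C u with hQdef
    have hba : b ≠ a := hab.symm
    have hQbe : Q b = ∅ := by simp [hQdef, hba]
    have hQaa : Q a = C a ∪ C b := by simp [hQdef]
    have hQav : ∀ v, v ≠ a → v ≠ b → Q v = C v := by
      intro v h1 h2; simp [hQdef, h1, h2]
    have hQpart : IsPartition Q := by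
      intro x
      by_cases hx : idx x = a ∨ idx x = b
      · refine ⟨a, ?_, ?_⟩
        · show x ∈ Q a
          rw [hQaa, mem_union]
          rcases hx with h | h
          · exact Or.inl (by rw [← h]; exact hmem x)
          · exact Or.inr (by rw [← h]; exact hmem x)
        · intro y hy
          by_cases h1 : y = a
          · exact h1
          · exfalso
            by_cases h2 : y = b
            · rw [h2, hQbe] at hy
              exact Finset.notMem_empty x hy
            · rw [hQav y h1 h2] at hy
              have h3 := huniq x y hy
              rcases hx with h | h
              · exact h1 (by rw [h3, h])
              · exact h2 (by rw [h3, h])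
      · push_neg at hx
        refine ⟨idx x, ?_, ?_⟩
        · show x ∈ Q (idx x)
          rw [hQav (idx x) hx.1 hx.2]
          exact hmem x
        · intro y hy
          by_cases h1 : y = a
          · rw [h1, hQaa, mem_union] at hy
            rcases hy with h | h
            · exact absurd (huniq x a h).symm hx.1
            · exact absurd (huniq x b h).symm hx.2
          · by_cases h2 : y = b
            · rw [h2, hQbe] at hy
              exact absurd hy (Finset.notMem_empty x)
            · rw [hQav y h1 h2] at hy
              exact huniq x y hy
    have hdisjab : Disjoint (C a) (C b) := by
      rw [Finset.disjoint_left]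
      intro x hxa hxb
      exact hCdisj a b x hab hxa hxb
    have hQcost : kmedCost dist Q c = kmedCost dist C c := by
      unfold kmedCost
      rw [sum_split2 a b hab (fun i => ∑ p ∈ Q i, dist p (c i)),
          sum_split2 a b hab (fun i => ∑ p ∈ C i, dist p (c i))]
      have hoff : ∑ v ∈ (univ.erase a).erase b, (∑ p ∈ Q v, dist p (c v))
          = ∑ v ∈ (univ.erase a).erase b, (∑ p ∈ C v, dist p (c v)) := by
        refine Finset.sum_congr rfl fun v hv => ?_
        have h1 : v ≠ b := Finset.ne_of_mem_erase hv
        have h2 : v ≠ a := Finset.ne_of_mem_erase (Finset.mem_of_mem_erase hv)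
        rw [hQav v h2 h1]
      have e1 : Q a = C a ∪ C b := hQaa
      have e2 : ∑ p ∈ C b, dist p (c a) = ∑ p ∈ C b, dist p (c b) := by rw [hcab]
      have hQa : ∑ p ∈ Q a, dist p (c a)
          = (∑ p ∈ C a, dist p (c a)) + ∑ p ∈ C b, dist p (c b) := by
        rw [e1, Finset.sum_union hdisjab, e2]
      have hQb : ∑ p ∈ Q b, dist p (c b) = 0 := by
        rw [hQbe, Finset.sum_empty]
      rw [hoff, hQa, hQb]
      ring
    have hQopt : IsOptimalKMed dist Q c :=
      ⟨hQpart, fun R e hR => by rw [hQcost]; exact hCmin R e hR⟩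
    have hdb : ∀ p q : S, dist p q ≤ dist p q ∧ dist p q ≤ α * dist p q := by
      intro p q
      exact ⟨le_refl _, le_mul_of_one_le_left dist_nonneg hα.le⟩
    obtain ⟨ρ, hρ⟩ := hres dist hdb Q c hQopt
    have hρ' : (∑ i, (((C i) \ (Q (ρ i))).card : ℝ)) ≤ E := hρ
    have hρw : ∀ w, ((C w \ Q (ρ w)).card:ℝ) ≤ E := by
      intro w
      calc ((C w \ Q (ρ w)).card:ℝ)
          ≤ ∑ v, ((C v \ Q (ρ v)).card : ℝ) :=
            Finset.single_le_sum (f := fun v => ((C v \ Q (ρ v)).card : ℝ))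
              (fun v _ => Nat.cast_nonneg _) (mem_univ w)
        _ ≤ E := hρ'
    have hinter : ∀ w, (C w ∩ Q (ρ w)).Nonempty := by
      intro w
      rw [Finset.nonempty_iff_ne_empty]
      intro h0
      have hc := Finset.card_inter_add_card_sdiff (C w) (Q (ρ w))
      rw [h0, Finset.card_empty, zero_add] at hc
      have hcR : ((C w \ Q (ρ w)).card:ℝ) = ((C w).card:ℝ) := by exact_mod_cast hc
      have := hρw w
      have := h2E1 w
      linarith
    obtain ⟨x, hx⟩ := hinter b
    obtain ⟨hxC, hxQ⟩ := mem_inter.1 hx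
    have hρb : ρ b = a := by
      by_contra h1
      by_cases h2 : ρ b = b
      · rw [h2, hQbe] at hxQ
        exact Finset.notMem_empty x hxQ
      · have h3 : x ∈ C (ρ b) := by
          rwa [hQav (ρ b) h1 h2] at hxQ
        exact hCdisj b (ρ b) x (fun h => h2 h.symm) hxC h3
    obtain ⟨y, hy⟩ := hinter a
    obtain ⟨hyC, hyQ⟩ := mem_inter.1 hy
    have hρa_ne : ρ a ≠ a := by
      intro h
      exact hab (ρ.injective (by rw [h, hρb]))
    by_cases h2 : ρ a = b
    · rw [h2, hQbe] at hyQ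
      exact Finset.notMem_empty y hyQ
    · have h3 : y ∈ C (ρ a) := by
        rwa [hQav (ρ a) hρa_ne h2] at hyQ
      exact hCdisj a (ρ a) y (fun h => hρa_ne h.symm) hyC h3
  -- the perturbed distance
  set d3 : S → S → ℝ := fun q y => if y = c (jx q) then dist q y else α * dist q y with hd3def
  have hd3eq1 : ∀ q : S, d3 q (c (jx q)) = dist q (c (jx q)) := by
    intro q; simp only [hd3def, if_pos rfl]
  have hd3eq2 : ∀ (q y : S), y ≠ c (jx q) → d3 q y = α * dist q y := by
    intro q y h; simp only [hd3def, if_neg h]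
  have hd3low : ∀ p q : S, dist p q ≤ d3 p q ∧ d3 p q ≤ α * dist p q := by
    intro p q
    by_cases h : q = c (jx p)
    · simp only [hd3def, if_pos h]
      refine ⟨le_refl _, ?_⟩
      nlinarith [dist_nonneg (x := p) (y := q)]
    · simp only [hd3def, if_neg h]
      refine ⟨?_, le_refl _⟩
      nlinarith [dist_nonneg (x := p) (y := q)]
  -- S is nonempty
  have hBadne : Bad.Nonempty := by
    have hpos : 0 < hBadfin.toFinset.card := by
      by_contra h
      push_neg at h
      have h0 : hBadfin.toFinset.card = 0 := by omega
      rw [h0] at hcon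
      simp only [Nat.cast_zero] at hcon
      linarith
    obtain ⟨p, hp⟩ := Finset.card_pos.1 hpos
    exact ⟨p, (Set.Finite.mem_toFinset hBadfin).1 hp⟩
  obtain ⟨p₀, _⟩ := hBadne
  haveI : Nonempty S := ⟨p₀⟩
  -- optimal clustering under d3
  obtain ⟨P, cP, hOpt3⟩ := exists_opt d3 C hPC
  obtain ⟨σ, hσ⟩ := hres d3 hd3low P cP hOpt3
  set Pt : Fin k → Finset S := fun w => P (σ w) with hPtdef
  set ut : Fin k → S := fun w => cP (σ w) with hutdef
  have hPtpart : IsPartition Pt := by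
    intro x
    obtain ⟨i, hi, hiu⟩ := hOpt3.1 x
    refine ⟨σ.symm i, ?_, ?_⟩
    · simp only [hPtdef, Equiv.apply_symm_apply]; exact hi
    · intro y hy
      have h1 : σ y = i := hiu (σ y) hy
      have : y = σ.symm (σ y) := (Equiv.symm_apply_apply σ y).symm
      rw [this, h1]
  have hPtmin : ∀ (Q : Fin k → Finset S) (e : Fin k → S), IsPartition Q →
      kmedCost d3 Pt ut ≤ kmedCost d3 Q e := by
    intro Q e hQ
    have heq : kmedCost d3 Pt ut = kmedCost d3 P cP := by
      unfold kmedCost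
      exact Equiv.sum_comp σ (fun i => ∑ p ∈ P i, d3 p (cP i))
    rw [heq]; exact hOpt3.2 Q e hQ
  have hclose : ∑ w, ((C w \ Pt w).card : ℝ) ≤ E := hσ
  -- the per-cluster inequality
  have hSw : ∀ w, ∑ q ∈ Pt w, dist q (c (jx q)) ≤ ∑ q ∈ Pt w, d3 q (ut w) := by
    intro w
    by_cases hrange : ∃ v, ut w = c v
    · -- the cluster's center is an original center: pointwise comparison
      obtain ⟨v, hv⟩ := hrange
      refine Finset.sum_le_sum fun q _ => ?_
      by_cases heq : ut w = c (jx q)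
      · rw [heq, hd3eq1 q]
      · rw [hd3eq2 q (ut w) heq, hv]
        calc dist q (c (jx q)) ≤ α * dist q (c (idx q)) := hthale q
          _ ≤ α * dist q (c v) := mul_le_mul_of_nonneg_left (hvor q v) hα0.le
    · push_neg at hrange
      set A : Finset S := C w ∩ Pt w with hAdef
      set G : Finset S := A \ B' with hGdef
      set M : Finset S := A ∩ B' with hMdef
      set Fs : Finset S := Pt w \ C w with hFsdef
      set Rem : Finset S := C w \ Pt w with hRemdef
      set D : ℝ := dist (ut w) (c w) with hDdef
      have hDnn : 0 ≤ D := dist_nonneg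
      -- membership facts
      have hAC : ∀ q ∈ A, q ∈ C w := fun q hq => (mem_inter.1 hq).1
      have hidxA : ∀ q ∈ A, idx q = w := fun q hq => (huniq q w (hAC q hq)).symm
      have hGA : G ⊆ A := Finset.sdiff_subset
      have hMA : M ⊆ A := Finset.inter_subset_left
      have hjxG : ∀ q ∈ G, jx q = w := by
        intro q hq
        have h2 : q ∉ B' := (mem_sdiff.1 hq).2
        rw [hjxnB q h2, hidxA q (hGA hq)]
      have hjxM : ∀ q ∈ M, jx q ≠ w := by
        intro q hq
        have h2 : q ∈ B' := (mem_inter.1 hq).2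
        rw [← hidxA q (hMA hq)]
        exact hjxne q h2
      -- values of d3
      have hd3u : ∀ q : S, d3 q (ut w) = α * dist q (ut w) :=
        fun q => hd3eq2 q (ut w) (hrange (jx q))
      have hd3Gcw : ∀ q ∈ G, d3 q (c w) = dist q (c w) := by
        intro q hq
        have h1 : c w = c (jx q) := by rw [hjxG q hq]
        rw [h1]
        exact hd3eq1 q
      have hthaG : ∀ q ∈ G, dist q (c (jx q)) = dist q (c w) := by
        intro q hq
        rw [hjxG q hq]
      have hd3Mcw : ∀ q ∈ M, d3 q (c w) = α * dist q (c w) := by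
        intro q hq
        exact hd3eq2 q (c w) (fun h => hcc (jx q) w (hjxM q hq) h.symm)
      have hthaM : ∀ q ∈ M, dist q (c (jx q)) ≤ α * dist q (c w) := by
        intro q hq
        calc dist q (c (jx q)) ≤ α * dist q (c (idx q)) := hthale q
          _ = α * dist q (c w) := by rw [hidxA q (hMA hq)]
      have hthaF : ∀ q : S, dist q (c (jx q)) ≤ α * dist q (c w) := by
        intro q
        calc dist q (c (jx q)) ≤ α * dist q (c (idx q)) := hthale q
          _ ≤ α * dist q (c w) := mul_le_mul_of_nonneg_left (hvor q w) hα0.le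
      -- sum decompositions
      have hsplitPt : ∀ f : S → ℝ, ∑ q ∈ Pt w, f q = (∑ q ∈ A, f q) + ∑ q ∈ Fs, f q := by
        intro f
        rw [hAdef, hFsdef, Finset.inter_comm]
        exact (Finset.sum_inter_add_sum_sdiff _ _ _).symm
      have hsplitA : ∀ f : S → ℝ, ∑ q ∈ A, f q = (∑ q ∈ M, f q) + ∑ q ∈ G, f q := by
        intro f
        rw [hMdef, hGdef]
        exact (Finset.sum_inter_add_sum_sdiff _ _ _).symm
      have hsplitC : ∀ f : S → ℝ, ∑ q ∈ C w, f q = (∑ q ∈ A, f q) + ∑ q ∈ Rem, f q := by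
        intro f
        rw [hAdef, hRemdef]
        exact (Finset.sum_inter_add_sum_sdiff _ _ _).symm
      -- named sums
      set xG : ℝ := ∑ q ∈ G, dist q (c w) with hxGdef
      set xM : ℝ := ∑ q ∈ M, dist q (c w) with hxMdef
      set xF : ℝ := ∑ q ∈ Fs, dist q (c w) with hxFdef
      set xR : ℝ := ∑ q ∈ Rem, dist q (c w) with hxRdef
      set uG : ℝ := ∑ q ∈ G, dist q (ut w) with huGdef
      set uM : ℝ := ∑ q ∈ M, dist q (ut w) with huMdef
      set uF : ℝ := ∑ q ∈ Fs, dist q (ut w) with huFdef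
      set uR : ℝ := ∑ q ∈ Rem, dist q (ut w) with huRdef
      have hxGnn : 0 ≤ xG := Finset.sum_nonneg fun q _ => dist_nonneg
      -- triangle inequality facts
      have htri1 : ∀ q : S, dist q (c w) ≤ dist q (ut w) + D := by
        intro q
        rw [hDdef]
        exact dist_triangle q (ut w) (c w)
      have htri2 : ∀ q : S, dist q (ut w) ≤ dist q (c w) + D := by
        intro q
        rw [hDdef, dist_comm (ut w) (c w)]
        exact dist_triangle q (c w) (ut w)
      have htri3 : ∀ q : S, D ≤ dist q (c w) + dist q (ut w) := by
        intro q
        rw [hDdef]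
        calc dist (ut w) (c w) ≤ dist (ut w) q + dist q (c w) := dist_triangle (ut w) q (c w)
          _ = dist q (c w) + dist q (ut w) := by rw [dist_comm (ut w) q]; ring
      have hsum1M : xM ≤ uM + (M.card : ℝ) * D := by
        rw [hxMdef, huMdef]
        calc ∑ q ∈ M, dist q (c w) ≤ ∑ q ∈ M, (dist q (ut w) + D) :=
              Finset.sum_le_sum fun q _ => htri1 q
          _ = (∑ q ∈ M, dist q (ut w)) + (M.card:ℝ) * D := by
              rw [Finset.sum_add_distrib, Finset.sum_const, nsmul_eq_mul]
      have hsum1F : xF ≤ uF + (Fs.card : ℝ) * D := by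
        rw [hxFdef, huFdef]
        calc ∑ q ∈ Fs, dist q (c w) ≤ ∑ q ∈ Fs, (dist q (ut w) + D) :=
              Finset.sum_le_sum fun q _ => htri1 q
          _ = (∑ q ∈ Fs, dist q (ut w)) + (Fs.card:ℝ) * D := by
              rw [Finset.sum_add_distrib, Finset.sum_const, nsmul_eq_mul]
      have hsum2R : uR ≤ xR + (Rem.card : ℝ) * D := by
        rw [hxRdef, huRdef]
        calc ∑ q ∈ Rem, dist q (ut w) ≤ ∑ q ∈ Rem, (dist q (c w) + D) :=
              Finset.sum_le_sum fun q _ => htri2 q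
          _ = (∑ q ∈ Rem, dist q (c w)) + (Rem.card:ℝ) * D := by
              rw [Finset.sum_add_distrib, Finset.sum_const, nsmul_eq_mul]
      have hsum3G : (G.card:ℝ) * D ≤ xG + uG := by
        rw [hxGdef, huGdef]
        have h1 : ∑ q ∈ G, D ≤ ∑ q ∈ G, (dist q (c w) + dist q (ut w)) :=
          Finset.sum_le_sum fun q _ => htri3 q
        rw [Finset.sum_const, nsmul_eq_mul, Finset.sum_add_distrib] at h1
        exact h1
      -- median optimality of c w for C w
      have hmed : xM + xG ≤ uM + uG + (Rem.card:ℝ) * D := by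
        have h1 : ∑ q ∈ C w, dist q (c w) ≤ ∑ q ∈ C w, dist q (ut w) :=
          center_swap hCmin hPC w (ut w)
        rw [hsplitC (fun q => dist q (c w)), hsplitC (fun q => dist q (ut w)),
            hsplitA (fun q => dist q (c w)), hsplitA (fun q => dist q (ut w))] at h1
        have h2 : (xM + xG) + xR ≤ (uM + uG) + uR := h1
        linarith [hsum2R]
      -- center-swap optimality of ut w against c w under d3
      have hCO : α * uM + α * uG + α * uF ≤ xG + α * xM + α * xF := by
        have h1 : ∑ q ∈ Pt w, d3 q (ut w) ≤ ∑ q ∈ Pt w, d3 q (c w) :=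
          center_swap hPtmin hPtpart w (c w)
        have hL : ∑ q ∈ Pt w, d3 q (ut w) = α * uM + α * uG + α * uF := by
          rw [hsplitPt (fun q => d3 q (ut w)), hsplitA (fun q => d3 q (ut w))]
          have e1 : ∑ q ∈ M, d3 q (ut w) = α * uM := by
            rw [huMdef, Finset.mul_sum]
            exact Finset.sum_congr rfl fun q _ => hd3u q
          have e2 : ∑ q ∈ G, d3 q (ut w) = α * uG := by
            rw [huGdef, Finset.mul_sum]
            exact Finset.sum_congr rfl fun q _ => hd3u q
          have e3 : ∑ q ∈ Fs, d3 q (ut w) = α * uF := by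
            rw [huFdef, Finset.mul_sum]
            exact Finset.sum_congr rfl fun q _ => hd3u q
          rw [e1, e2, e3]
        have hR : ∑ q ∈ Pt w, d3 q (c w) ≤ xG + α * xM + α * xF := by
          rw [hsplitPt (fun q => d3 q (c w)), hsplitA (fun q => d3 q (c w))]
          have e1 : ∑ q ∈ M, d3 q (c w) = α * xM := by
            rw [hxMdef, Finset.mul_sum]
            exact Finset.sum_congr rfl fun q hq => hd3Mcw q hq
          have e2 : ∑ q ∈ G, d3 q (c w) = xG := by
            rw [hxGdef]
            exact Finset.sum_congr rfl fun q hq => hd3Gcw q hq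
          have e3 : ∑ q ∈ Fs, d3 q (c w) ≤ α * xF := by
            rw [hxFdef, Finset.mul_sum]
            exact Finset.sum_le_sum fun q _ => (hd3low q (c w)).2
          linarith [e1, e2, e3]
        linarith [h1, hL, hR]
      -- counting facts
      have hcard1 : (A.card:ℝ) + (Rem.card:ℝ) = ((C w).card:ℝ) := by
        rw [hAdef, hRemdef]
        exact_mod_cast Finset.card_inter_add_card_sdiff (C w) (Pt w)
      have hcard2 : (M.card:ℝ) + (G.card:ℝ) = (A.card:ℝ) := by
        rw [hMdef, hGdef]
        exact_mod_cast Finset.card_inter_add_card_sdiff A B'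
      have hmw : (M.card:ℝ) ≤ (m:ℝ) := by
        have h4 := Finset.card_le_card (show M ⊆ B' by rw [hMdef]; exact Finset.inter_subset_right)
        rw [hB'card] at h4
        exact_mod_cast h4
      have hepsfw : (Rem.card:ℝ) + (Fs.card:ℝ) ≤ E := by
        have hFsfib : Fs.card = ∑ v, (Fs.filter (fun q => idx q = v)).card :=
          Finset.card_eq_sum_card_fiberwise fun x _ => mem_univ _
        have hFsw : (Fs.filter (fun q => idx q = w)) = ∅ := by
          rw [Finset.filter_eq_empty_iff]
          intro q hq hqw
          rw [hFsdef] at hq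
          exact (mem_sdiff.1 hq).2 (by rw [← hqw]; exact hmem q)
        have hFsv : ∀ v ∈ univ.erase w,
            (Fs.filter (fun q => idx q = v)).card ≤ (C v \ Pt v).card := by
          intro v hv
          have hvw : v ≠ w := Finset.ne_of_mem_erase hv
          apply Finset.card_le_card
          intro q hq
          obtain ⟨hqFs, hqv⟩ := mem_filter.1 hq
          rw [hFsdef] at hqFs
          obtain ⟨hqPt, hqnC⟩ := mem_sdiff.1 hqFs
          rw [mem_sdiff]
          constructor
          · rw [← hqv]; exact hmem q
          · intro hqPtv
            obtain ⟨i0, hi0, hi0u⟩ := hPtpart q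
            exact hvw ((hi0u v hqPtv).trans (hi0u w hqPt).symm)
        have hNat : Rem.card + Fs.card ≤ ∑ v, (C v \ Pt v).card := by
          have h1 : Fs.card ≤ ∑ v ∈ univ.erase w, (C v \ Pt v).card := by
            rw [hFsfib, ← Finset.sum_erase_add univ _ (mem_univ w), hFsw,
              Finset.card_empty, add_zero]
            exact Finset.sum_le_sum hFsv
          have h2 : (∑ v ∈ univ.erase w, (C v \ Pt v).card) + (C w \ Pt w).card
              = ∑ v, (C v \ Pt v).card := Finset.sum_erase_add _ _ (mem_univ w)
          have h3 : Rem.card = (C w \ Pt w).card := by rw [hRemdef]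
          omega
        calc (Rem.card:ℝ) + (Fs.card:ℝ) ≤ ((∑ v, (C v \ Pt v).card : ℕ) : ℝ) := by
              exact_mod_cast hNat
          _ = ∑ v, ((C v \ Pt v).card : ℝ) := by push_cast; rfl
          _ ≤ E := hclose
      -- the counting inequality from the size assumption
      have hcnt : (α+1) * ((Rem.card:ℝ) + (Fs.card:ℝ))
          ≤ (α-1) * ((G.card:ℝ) - (M.card:ℝ) - (Fs.card:ℝ)) := by
        have h := hsize w
        rw [mul_assoc, ← hEdef] at h
        have hkey : (α - 1) * ((2 + 2*α/(α-1)) * E + 2*α*(α+1)/(α-1))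
            = (4*α - 2) * E + (2*α^2 + 2*α) := by
          field_simp
          ring
        have h2 : (4*α-2)*E + (2*α^2+2*α) < (α-1) * ((C w).card:ℝ) := by
          rw [← hkey]
          exact mul_lt_mul_of_pos_left h hβ
        have hG : (G.card:ℝ) = ((C w).card:ℝ) - (Rem.card:ℝ) - (M.card:ℝ) := by
          linarith [hcard1, hcard2]
        have hprod1 : 2*α*((Rem.card:ℝ) + (Fs.card:ℝ)) ≤ 2*α*E :=
          mul_le_mul_of_nonneg_left hepsfw (by linarith)
        have hprod2 : 2*(α-1)*(M.card:ℝ) ≤ 2*(α-1)*(E+1) := by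
          have h5 : (M.card:ℝ) ≤ E + 1 := le_trans hmw hmE1
          have h6 : (0:ℝ) ≤ 2*(α-1) := by linarith
          exact mul_le_mul_of_nonneg_left h5 h6
        rw [hG]
        linarith [h2, hprod1, hprod2, sq_nonneg α]
      -- deduce (α-1) * xG ≥ α * (Rem+Fs) * D
      have hV : α * ((G.card:ℝ) * D)
          ≤ (α+1) * xG + α * ((M.card:ℝ) * D) + α * ((Fs.card:ℝ) * D) := by
        have t3 : α * ((G.card:ℝ) * D) ≤ α * (xG + uG) :=
          mul_le_mul_of_nonneg_left hsum3G hα0.le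
        have t1 : α * xM ≤ α * (uM + (M.card:ℝ)*D) := mul_le_mul_of_nonneg_left hsum1M hα0.le
        have t2 : α * xF ≤ α * (uF + (Fs.card:ℝ)*D) := mul_le_mul_of_nonneg_left hsum1F hα0.le
        linarith [hCO, t3, t1, t2]
      have hkey2 : α * (((Rem.card:ℝ) + (Fs.card:ℝ)) * D) ≤ (α-1) * xG := by
        have e1 : (α-1) * (α * ((G.card:ℝ) * D))
            ≤ (α-1) * ((α+1) * xG + α * ((M.card:ℝ) * D) + α * ((Fs.card:ℝ) * D)) :=
          mul_le_mul_of_nonneg_left hV hβ.le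
        have e2 : ((α+1) * ((Rem.card:ℝ) + (Fs.card:ℝ))) * (α * D)
            ≤ ((α-1) * ((G.card:ℝ) - (M.card:ℝ) - (Fs.card:ℝ))) * (α * D) :=
          mul_le_mul_of_nonneg_right hcnt (mul_nonneg hα0.le hDnn)
        have e3 : (α+1) * (α * (((Rem.card:ℝ) + (Fs.card:ℝ)) * D)) ≤ (α+1) * ((α-1) * xG) := by
          linarith [e1, e2]
        have hα1pos : (0:ℝ) < α + 1 := by linarith
        exact le_of_mul_le_mul_left e3 hα1pos
      -- finish
      have hLHS : ∑ q ∈ Pt w, dist q (c (jx q)) ≤ xG + α * xM + α * xF := by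
        rw [hsplitPt (fun q => dist q (c (jx q))), hsplitA (fun q => dist q (c (jx q)))]
        have e1 : ∑ q ∈ M, dist q (c (jx q)) ≤ α * xM := by
          rw [hxMdef, Finset.mul_sum]
          exact Finset.sum_le_sum fun q hq => hthaM q hq
        have e2 : ∑ q ∈ G, dist q (c (jx q)) = xG := by
          rw [hxGdef]
          exact Finset.sum_congr rfl fun q hq => hthaG q hq
        have e3 : ∑ q ∈ Fs, dist q (c (jx q)) ≤ α * xF := by
          rw [hxFdef, Finset.mul_sum]
          exact Finset.sum_le_sum fun q _ => hthaF q
        linarith [e1, e2, e3]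
      have hRHS : ∑ q ∈ Pt w, d3 q (ut w) = α * uM + α * uG + α * uF := by
        rw [hsplitPt (fun q => d3 q (ut w)), hsplitA (fun q => d3 q (ut w))]
        have e1 : ∑ q ∈ M, d3 q (ut w) = α * uM := by
          rw [huMdef, Finset.mul_sum]
          exact Finset.sum_congr rfl fun q _ => hd3u q
        have e2 : ∑ q ∈ G, d3 q (ut w) = α * uG := by
          rw [huGdef, Finset.mul_sum]
          exact Finset.sum_congr rfl fun q _ => hd3u q
        have e3 : ∑ q ∈ Fs, d3 q (ut w) = α * uF := by
          rw [huFdef, Finset.mul_sum]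
          exact Finset.sum_congr rfl fun q _ => hd3u q
        rw [e1, e2, e3]
      rw [hRHS]
      have hmedα : α*(xM + xG) ≤ α*(uM + uG + (Rem.card:ℝ)*D) :=
        mul_le_mul_of_nonneg_left hmed hα0.le
      have hFα : α * xF ≤ α * (uF + (Fs.card:ℝ)*D) := mul_le_mul_of_nonneg_left hsum1F hα0.le
      linarith [hLHS, hmedα, hFα, hkey2]
  -- endgame: the moved clustering Qs
  set Qs : Fin k → Finset S := fun w => univ.filter (fun q => jx q = w) with hQsdef
  have hQspart : IsPartition Qs := by
    intro x
    refine ⟨jx x, ?_, ?_⟩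
    · simp [hQsdef]
    · intro y hy
      simp only [hQsdef, mem_filter, mem_univ, true_and] at hy
      exact hy.symm
  have hcostQs : kmedCost d3 Qs c = ∑ q, dist q (c (jx q)) := by
    unfold kmedCost
    calc ∑ w, ∑ q ∈ Qs w, d3 q (c w)
        = ∑ w, ∑ q ∈ univ.filter (fun q => jx q = w), dist q (c (jx q)) := by
          refine Finset.sum_congr rfl fun w _ => ?_
          refine Finset.sum_congr rfl fun q hq => ?_
          have hqw : jx q = w := (mem_filter.1 hq).2
          rw [← hqw]
          exact hd3eq1 q
      _ = ∑ q, dist q (c (jx q)) := Finset.sum_fiberwise _ _ _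
  have hTV : ∑ q, dist q (c (jx q)) ≤ kmedCost d3 Pt ut := by
    unfold kmedCost
    calc ∑ q, dist q (c (jx q)) = ∑ w, ∑ q ∈ Pt w, dist q (c (jx q)) :=
          (partition_sum hPtpart _).symm
      _ ≤ ∑ w, ∑ q ∈ Pt w, d3 q (ut w) := Finset.sum_le_sum fun w _ => hSw w
  have hQsopt : IsOptimalKMed d3 Qs c := by
    refine ⟨hQspart, fun Q e hQ => ?_⟩
    rw [hcostQs]
    exact le_trans hTV (hPtmin Q e hQ)
  obtain ⟨τ, hτ⟩ := hres d3 hd3low Qs c hQsopt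
  have hτ' : (∑ i, (((C i) \ (Qs (τ i))).card : ℝ)) ≤ E := hτ
  have hτw : ∀ w, ((C w \ Qs (τ w)).card:ℝ) ≤ E := by
    intro w
    calc ((C w \ Qs (τ w)).card:ℝ)
        ≤ ∑ v, ((C v \ Qs (τ v)).card : ℝ) :=
          Finset.single_le_sum (f := fun v => ((C v \ Qs (τ v)).card : ℝ))
            (fun v _ => Nat.cast_nonneg _) (mem_univ w)
      _ ≤ E := hτ'
  have hτid : ∀ w, τ w = w := by
    intro w
    by_contra hne
    have hsub : C w ∩ Qs (τ w) ⊆ B' := by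
      intro q hq
      obtain ⟨hqC, hqQ⟩ := mem_inter.1 hq
      by_contra hqB
      have h1 : jx q = τ w := (mem_filter.1 hqQ).2
      have h2 : jx q = idx q := hjxnB q hqB
      have h3 : w = idx q := huniq q w hqC
      exact hne (by rw [← h1, h2, ← h3])
    have hcard1 : ((C w ∩ Qs (τ w)).card : ℝ) ≤ (m:ℝ) := by
      have h4 := Finset.card_le_card hsub
      rw [hB'card] at h4
      exact_mod_cast h4
    have hcard2 : ((C w ∩ Qs (τ w)).card:ℝ) + ((C w \ Qs (τ w)).card:ℝ) = ((C w).card:ℝ) := by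
      exact_mod_cast Finset.card_inter_add_card_sdiff (C w) (Qs (τ w))
    have h5 := hτw w
    have h6 := h2E1 w
    linarith
  have hfibB : B'.card = ∑ w, (B'.filter (fun p => idx p = w)).card :=
    Finset.card_eq_sum_card_fiberwise fun x _ => mem_univ _
  have hsubw : ∀ w : Fin k, B'.filter (fun p => idx p = w) ⊆ C w \ Qs w := by
    intro w p hp
    obtain ⟨hpB, hpw⟩ := mem_filter.1 hp
    rw [mem_sdiff]
    constructor
    · rw [← hpw]; exact hmem p
    · intro hpQ
      have h1 : jx p = w := (mem_filter.1 hpQ).2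
      exact hjxne p hpB (by rw [h1, ← hpw])
  have hmle : (m:ℝ) ≤ ∑ w, ((C w \ Qs (τ w)).card : ℝ) := by
    have h1 : m ≤ ∑ w, (C w \ Qs w).card := by
      rw [← hB'card, hfibB]
      exact Finset.sum_le_sum fun w _ => Finset.card_le_card (hsubw w)
    have h2 : ∑ w, ((C w \ Qs (τ w)).card:ℝ) = ∑ w, ((C w \ Qs w).card:ℝ) :=
      Finset.sum_congr rfl fun w _ => by rw [hτid w]
    rw [h2]
    exact_mod_cast h1
  linarith [hτ', hmle, hEm]
end

section
/- Let (S,d) be a k-median instance whose optimal clustering has at most εn bad points, with α > 2+√7, ε ≤ ρ/5 where ρ = (min_i|C_i| − 15)/n. For distinct optimal clusters C_i, C_j and any good point p_j ∈ C_j, we have d(c_i, p_j) > 3·d(c_i, q_i*), where q_i* is the good point of C_i farthest from c_i. -/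
/-- `p` is a good point of cluster `i`: it lies in `C i` and is α times closer to its own
center than to any other center. -/
def Good {S : Type*} (d : S → S → ℝ) {k : ℕ} (C : Fin k → Finset S) (c : Fin k → S)
    (α : ℝ) (p : S) (i : Fin k) : Prop :=
  p ∈ C i ∧ ∀ j, j ≠ i → α * d (c i) p < d (c j) p

/-- with at most εn bad points, α > 2+√7 and ε ≤ ρ/5 (ρ = (min_i|C_i|−15)/n),
for distinct clusters i ≠ j and any good point p_j of C_j we have
d(c_i, p_j) > 3·d(c_i, q_i*), where q_i* is the good point of C_i farthest from c_i. -/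
theorem stmt9 {S : Type*} [MetricSpace S] [Fintype S] {k : ℕ} {α ε : ℝ}
    (C : Fin k → Finset S) (c : Fin k → S) (hpart : IsPartition C)
    (hα : 2 + Real.sqrt 7 < α)
    (hbad : (Set.ncard {p : S | ∃ i, p ∈ C i ∧ ¬ Good dist C c α p i} : ℝ) ≤
      ε * (Fintype.card S))
    (hε : ∀ i, ε ≤ (((C i).card : ℝ) - 15) / (5 * (Fintype.card S)))
    (i j : Fin k) (hij : j ≠ i)
    (qi : S) (hqi : Good dist C c α qi i)
    (hqimax : ∀ q, Good dist C c α q i → dist (c i) q ≤ dist (c i) qi)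
    (pj : S) (hpj : Good dist C c α pj j) :
    3 * dist (c i) qi < dist (c i) pj := by
  obtain ⟨hqiC, hqig⟩ := hqi
  obtain ⟨hpjC, hpjg⟩ := hpj
  have h7 : Real.sqrt 7 ^ 2 = 7 := Real.sq_sqrt (by norm_num)
  have h7n : (0:ℝ) ≤ Real.sqrt 7 := Real.sqrt_nonneg 7
  have h1 := hqig j hij
  have h2 := hpjg i hij.symm
  have t1 : dist (c j) qi ≤ dist (c j) (c i) + dist (c i) qi := dist_triangle _ _ _
  have t2 : dist (c j) (c i) ≤ dist (c j) pj + dist pj (c i) := dist_triangle _ _ _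
  have e1 : dist pj (c i) = dist (c i) pj := dist_comm _ _
  have n1 : (0:ℝ) ≤ dist (c i) qi := dist_nonneg
  have n2 : (0:ℝ) ≤ dist (c j) pj := dist_nonneg
  have n3 : (0:ℝ) ≤ dist (c i) pj := dist_nonneg
  nlinarith [mul_nonneg n1 h7n, mul_nonneg n2 h7n, mul_nonneg n3 h7n,
    mul_nonneg n1 n2, mul_nonneg (mul_nonneg n1 h7n) h7n]
end

section
/- In a k-median instance where every good point p in optimal cluster C_i satisfies α·d(c_i,p) < d(c_j,p) for all j ≠ i with α > 2+√7: for any point p_i in the ball B(c_i, d(c_i,q_i*)) and any good point p_j in a different cluster C_j, d(p_i, p_j) > 2·d(c_i, q_i*). -/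
/-- with α > 2+√7, any point p_i of the ball B(c_i, d(c_i, q_i*)) and any
good point p_j of a different cluster C_j satisfy d(p_i, p_j) > 2·d(c_i, q_i*), where
q_i* is the good point of C_i farthest from c_i. -/
theorem stmt10 {S : Type*} [MetricSpace S] [Fintype S] {k : ℕ} {α : ℝ}
    (C : Fin k → Finset S) (c : Fin k → S) (hpart : IsPartition C)
    (hα : 2 + Real.sqrt 7 < α)
    (i j : Fin k) (hij : j ≠ i)
    (qi : S) (hqi : Good dist C c α qi i)
    (hqimax : ∀ q, Good dist C c α q i → dist (c i) q ≤ dist (c i) qi)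
    (pi : S) (hpi : dist pi (c i) ≤ dist (c i) qi)
    (pj : S) (hpj : Good dist C c α pj j) :
    2 * dist (c i) qi < dist pi pj := by
  have h1 : α * dist (c i) qi < dist (c j) qi := hqi.2 j hij
  have h2 : α * dist (c j) pj < dist (c i) pj := hpj.2 i hij.symm
  have t1 : dist (c j) qi ≤ dist (c j) pj + dist pj pi + dist pi (c i) + dist (c i) qi := by
    calc dist (c j) qi ≤ dist (c j) pi + dist pi qi := dist_triangle _ _ _
      _ ≤ (dist (c j) pj + dist pj pi) + (dist pi (c i) + dist (c i) qi) := by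
          gcongr <;> exact dist_triangle _ _ _
      _ = _ := by ring
  have t2 : dist (c i) pj ≤ dist pi (c i) + dist pi pj := by
    rw [show dist pi (c i) = dist (c i) pi from dist_comm _ _]
    exact dist_triangle _ _ _
  have hsq : Real.sqrt 7 ^ 2 = 7 := Real.sq_sqrt (by norm_num)
  have hs : Real.sqrt 7 ≥ 2 := by nlinarith [Real.sqrt_nonneg 7]
  have hα4 : α > 4 := by linarith
  have hcomm : dist pj pi = dist pi pj := dist_comm _ _
  have key : α^2 - 4*α - 3 > 0 := by nlinarith [hsq, Real.sqrt_nonneg 7]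
  have e1 : α * (α * dist (c i) qi) < α * dist (c j) qi :=
    mul_lt_mul_of_pos_left h1 (by linarith)
  have e2 : α * dist (c j) qi ≤ α * (dist (c j) pj + dist pj pi + dist pi (c i) + dist (c i) qi) :=
    mul_le_mul_of_nonneg_left t1 (by linarith)
  have e3 : α * dist pi (c i) ≤ α * dist (c i) qi :=
    mul_le_mul_of_nonneg_left hpi (by linarith)
  have main : α^2 * dist (c i) qi < dist (c i) qi + dist pi pj + α * dist pi pj
      + 2 * (α * dist (c i) qi) := by nlinarith [e1, e2, e3, h2, t2]
  by_contra hcon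
  push_neg at hcon
  have hr0 : (0:ℝ) ≤ dist (c i) qi := dist_nonneg
  nlinarith [mul_nonneg key.le hr0, mul_le_mul_of_nonneg_left hcon (by linarith : (0:ℝ) ≤ α)]
end

section
/- If a clustering instance is α-perturbation resilient to the min-sum objective, then for any two distinct optimal clusters C_i, C_j and any subset A ⊆ C_i, we have α·d_sum(A, C_i \ A) < d_sum(A, C_j), where d_sum(X,Y) = Σ_{p∈X} Σ_{q∈Y} d(p,q). -/
/-- min-sum cost of a clustering `P` under distance function `d`. -/
def msCost {S : Type*} (d : S → S → ℝ) {k : ℕ} (P : Fin k → Finset S) : ℝ :=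
  ∑ i, ∑ p ∈ P i, ∑ q ∈ P i, d p q

/-- Sum of pairwise distances between two sets. -/
def dsum {S : Type*} (d : S → S → ℝ) (A B : Finset S) : ℝ :=
  ∑ p ∈ A, ∑ q ∈ B, d p q

/-- α-perturbation resilience for min-sum: under every α-perturbation `d'` of `d`, `C` is
the unique optimal min-sum k-clustering (up to relabeling). -/
def MinsumResilient {S : Type*} (d : S → S → ℝ) (α : ℝ) {k : ℕ}
    (C : Fin k → Finset S) : Prop :=
  ∀ d' : S → S → ℝ, (∀ p q : S, d p q ≤ d' p q ∧ d' p q ≤ α * d p q) →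
    IsPartition C ∧ ∀ Q : Fin k → Finset S, IsPartition Q →
      (∃ σ : Equiv.Perm (Fin k), ∀ i, Q i = C (σ i)) ∨ msCost d' C < msCost d' Q

lemma dsum_union_left {S : Type*} [DecidableEq S] (d : S → S → ℝ) {X Y : Finset S}
    (B : Finset S) (h : Disjoint X Y) :
    dsum d (X ∪ Y) B = dsum d X B + dsum d Y B :=
  Finset.sum_union h

lemma dsum_union_right {S : Type*} [DecidableEq S] (d : S → S → ℝ) {X Y : Finset S}
    (B : Finset S) (h : Disjoint X Y) :
    dsum d B (X ∪ Y) = dsum d B X + dsum d B Y := by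
  unfold dsum
  rw [← Finset.sum_add_distrib]
  exact Finset.sum_congr rfl fun p _ => Finset.sum_union h

lemma dsum_congr {S : Type*} (d d' : S → S → ℝ) {X Y : Finset S}
    (h : ∀ p ∈ X, ∀ q ∈ Y, d' p q = d p q) : dsum d' X Y = dsum d X Y :=
  Finset.sum_congr rfl fun p hp => Finset.sum_congr rfl fun q hq => h p hp q hq

lemma dsum_scale {S : Type*} (d d' : S → S → ℝ) (α : ℝ) {X Y : Finset S}
    (h : ∀ p ∈ X, ∀ q ∈ Y, d' p q = α * d p q) : dsum d' X Y = α * dsum d X Y := by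
  unfold dsum
  rw [Finset.mul_sum]
  refine Finset.sum_congr rfl fun p hp => ?_
  rw [Finset.mul_sum]
  exact Finset.sum_congr rfl fun q hq => h p hp q hq

lemma dsum_swap {S : Type*} (d : S → S → ℝ) (hsym : ∀ p q, d p q = d q p)
    (X Y : Finset S) : dsum d X Y = dsum d Y X := by
  unfold dsum
  rw [Finset.sum_comm]
  exact Finset.sum_congr rfl fun p _ => Finset.sum_congr rfl fun q _ => hsym q p

/-- min-sum α-perturbation resilience implies
α·d_sum(A, C_i \ A) < d_sum(A, C_j) for any nonempty A ⊆ C_i and j ≠ i. -/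
theorem stmt11 {S : Type*} [MetricSpace S] [Fintype S] [DecidableEq S] {k : ℕ} {α : ℝ}
    (hα : 1 ≤ α) (C : Fin k → Finset S) (hne : ∀ i, (C i).Nonempty)
    (hres : MinsumResilient dist α C) :
    ∀ i j : Fin k, i ≠ j → ∀ A ⊆ C i, A.Nonempty →
      α * dsum dist A (C i \ A) < dsum dist A (C j) := by
  intro i j hij A hA hAne
  classical
  set B : Finset S := C i \ A with hB
  have hBsub : B ⊆ C i := Finset.sdiff_subset
  have hAnB : ∀ x ∈ A, x ∉ B := fun x hx hxB => (Finset.mem_sdiff.mp hxB).2 hx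
  have hBnA : ∀ x ∈ B, x ∉ A := fun x hxB => (Finset.mem_sdiff.mp hxB).2
  -- the perturbed distance
  set d' : S → S → ℝ := fun p q =>
    if (p ∈ A ∧ q ∈ B) ∨ (q ∈ A ∧ p ∈ B) then α * dist p q else dist p q with hd'
  have hpert : ∀ p q : S, dist p q ≤ d' p q ∧ d' p q ≤ α * dist p q := by
    intro p q
    have hle : dist p q ≤ α * dist p q := le_mul_of_one_le_left dist_nonneg hα
    by_cases h : (p ∈ A ∧ q ∈ B) ∨ (q ∈ A ∧ p ∈ B)
    · have : d' p q = α * dist p q := by simp only [hd', if_pos h]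
      rw [this]; exact ⟨hle, le_refl _⟩
    · have : d' p q = dist p q := by simp only [hd', if_neg h]
      rw [this]; exact ⟨le_refl _, hle⟩
  obtain ⟨hC, hopt⟩ := hres d' hpert
  have hdisj : ∀ m m' : Fin k, m ≠ m' → Disjoint (C m) (C m') := by
    intro m m' hmm
    rw [Finset.disjoint_left]
    intro x hx hx'
    obtain ⟨n, _, hu⟩ := hC x
    exact hmm ((hu m hx).trans (hu m' hx').symm)
  -- the alternative clustering: move A from C i to C j
  set Q : Fin k → Finset S := fun m => if m = i then B else if m = j then C j ∪ A else C m
    with hQ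
  have hQi : Q i = B := by simp [hQ]
  have hQj : Q j = C j ∪ A := by simp [hQ, hij.symm]
  have hQo : ∀ m, m ≠ i → m ≠ j → Q m = C m := by
    intro m h1 h2; simp [hQ, h1, h2]
  -- membership in Q
  have hQmem : ∀ (x : S) (m : Fin k), x ∈ Q m →
      (m = i ∧ x ∈ B) ∨ (m = j ∧ (x ∈ C j ∨ x ∈ A)) ∨ (m ≠ i ∧ m ≠ j ∧ x ∈ C m) := by
    intro x m hx
    by_cases h1 : m = i
    · left; exact ⟨h1, by rwa [h1, hQi] at hx⟩
    · by_cases h2 : m = j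
      · right; left
        refine ⟨h2, ?_⟩
        rw [h2, hQj] at hx
        exact Finset.mem_union.mp hx
      · right; right
        exact ⟨h1, h2, by rwa [hQo m h1 h2] at hx⟩
  have hQpart : IsPartition Q := by
    intro x
    obtain ⟨m, hm, hu⟩ := hC x
    by_cases hxA : x ∈ A
    · have hmi : i = m := hu i (hA hxA)
      refine ⟨j, by show x ∈ Q j; rw [hQj]; exact Finset.mem_union_right _ hxA, ?_⟩
      intro y hy
      rcases hQmem x y hy with ⟨h1, h2⟩ | ⟨h1, _⟩ | ⟨h1, h2, h3⟩
      · exact absurd hxA (hBnA x h2)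
      · exact h1
      · exact absurd ((hu y h3).trans hmi.symm) h1
    · by_cases hmi : m = i
      · have hxB : x ∈ B := Finset.mem_sdiff.mpr ⟨hmi ▸ hm, hxA⟩
        refine ⟨i, by show x ∈ Q i; rw [hQi]; exact hxB, ?_⟩
        intro y hy
        rcases hQmem x y hy with ⟨h1, _⟩ | ⟨h1, h2 | h2⟩ | ⟨h1, h2, h3⟩
        · exact h1
        · exact absurd (((hu j h2).trans hmi).symm) (h1 ▸ hij)
        · exact absurd h2 hxA
        · exact absurd ((hu y h3).trans hmi) h1
      · by_cases hmj : m = j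
        · refine ⟨j, by show x ∈ Q j; rw [hQj]; exact Finset.mem_union_left _ (hmj ▸ hm), ?_⟩
          intro y hy
          rcases hQmem x y hy with ⟨h1, h2⟩ | ⟨h1, _⟩ | ⟨h1, h2, h3⟩
          · exact absurd ((hu i (hBsub h2)).trans hmj) hij
          · exact h1
          · exact absurd ((hu y h3).trans hmj) h2
        · refine ⟨m, by show x ∈ Q m; rw [hQo m hmi hmj]; exact hm, ?_⟩
          intro y hy
          rcases hQmem x y hy with ⟨h1, h2⟩ | ⟨h1, h2 | h2⟩ | ⟨_, _, h3⟩
          · exact h1.trans (hu i (hBsub h2))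
          · exact h1.trans (hu j h2)
          · exact absurd h2 hxA
          · exact hu y h3
  -- Q is not a relabeling of C
  have hnoperm : ¬ ∃ σ : Equiv.Perm (Fin k), ∀ m, Q m = C (σ m) := by
    rintro ⟨σ, hσ⟩
    have h1 : B = C (σ i) := by rw [← hQi]; exact hσ i
    rcases B.eq_empty_or_nonempty with hBe | ⟨x, hx⟩
    · obtain ⟨y, hy⟩ := hne (σ i)
      rw [← h1, hBe] at hy
      exact absurd hy (Finset.notMem_empty y)
    · have hxCi : x ∈ C i := hBsub hx
      have hxCσ : x ∈ C (σ i) := h1 ▸ hx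
      obtain ⟨m, _, hu⟩ := hC x
      have hσi : σ i = i := (hu _ hxCσ).trans (hu i hxCi).symm
      rw [hσi] at h1
      obtain ⟨a, ha⟩ := hAne
      have : a ∈ B := h1 ▸ hA ha
      exact (Finset.mem_sdiff.mp this).2 ha
  have hlt : msCost d' C < msCost d' Q := (hopt Q hQpart).resolve_left hnoperm
  -- compute the costs
  have hABd : Disjoint A B := Finset.disjoint_sdiff
  have hCiu : A ∪ B = C i := Finset.union_sdiff_of_subset hA
  have hCjA : Disjoint (C j) A := (hdisj j i hij.symm).mono_right hA
  have hCjnA : ∀ x ∈ C j, x ∉ A := fun x hx => Finset.disjoint_left.mp hCjA hx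
  have hCjnB : ∀ x ∈ C j, x ∉ B :=
    fun x hx => Finset.disjoint_left.mp ((hdisj j i hij.symm).mono_right hBsub) hx
  -- evaluation of d' on blocks
  have eAA : ∀ p ∈ A, ∀ q ∈ A, d' p q = dist p q := by
    intro p hp q hq
    simp only [hd']
    rw [if_neg]
    rintro (⟨_, h⟩ | ⟨_, h⟩)
    · exact hAnB q hq h
    · exact hAnB p hp h
  have eAB : ∀ p ∈ A, ∀ q ∈ B, d' p q = α * dist p q := by
    intro p hp q hq
    simp only [hd']
    rw [if_pos (Or.inl ⟨hp, hq⟩)]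
  have eBA : ∀ p ∈ B, ∀ q ∈ A, d' p q = α * dist p q := by
    intro p hp q hq
    simp only [hd']
    rw [if_pos (Or.inr ⟨hq, hp⟩)]
  have eBB : ∀ p ∈ B, ∀ q ∈ B, d' p q = dist p q := by
    intro p hp q hq
    simp only [hd']
    rw [if_neg]
    rintro (⟨h, _⟩ | ⟨h, _⟩)
    · exact hBnA p hp h
    · exact hBnA q hq h
  have eJJ : ∀ p ∈ C j, ∀ q ∈ C j, d' p q = dist p q := by
    intro p hp q hq
    simp only [hd']
    rw [if_neg]
    rintro (⟨h, _⟩ | ⟨h, _⟩)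
    · exact hCjnA p hp h
    · exact hCjnA q hq h
  have eJA : ∀ p ∈ C j, ∀ q ∈ A, d' p q = dist p q := by
    intro p hp q hq
    simp only [hd']
    rw [if_neg]
    rintro (⟨h, _⟩ | ⟨_, h⟩)
    · exact hCjnA p hp h
    · exact hCjnB p hp h
  have eAJ : ∀ p ∈ A, ∀ q ∈ C j, d' p q = dist p q := by
    intro p hp q hq
    simp only [hd']
    rw [if_neg]
    rintro (⟨_, h⟩ | ⟨h, _⟩)
    · exact hCjnB q hq h
    · exact hCjnA q hq h
  -- block decompositions
  have cCi : dsum d' (C i) (C i)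
      = dsum dist A A + α * dsum dist A B + α * dsum dist B A + dsum dist B B := by
    rw [← hCiu, dsum_union_left d' _ hABd, dsum_union_right d' _ hABd,
      dsum_union_right d' _ hABd, dsum_congr dist d' eAA, dsum_scale dist d' α eAB,
      dsum_scale dist d' α eBA, dsum_congr dist d' eBB]
    ring
  have cQi : dsum d' (Q i) (Q i) = dsum dist B B := by
    rw [hQi, dsum_congr dist d' eBB]
  have cQj : dsum d' (Q j) (Q j)
      = dsum dist (C j) (C j) + dsum dist (C j) A + dsum dist A (C j) + dsum dist A A := by
    rw [hQj, dsum_union_left d' _ hCjA, dsum_union_right d' _ hCjA,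
      dsum_union_right d' _ hCjA, dsum_congr dist d' eJJ, dsum_congr dist d' eJA,
      dsum_congr dist d' eAJ, dsum_congr dist d' eAA]
    ring
  have cCj : dsum d' (C j) (C j) = dsum dist (C j) (C j) := dsum_congr dist d' eJJ
  -- sum over all clusters
  have hmsC : ∀ (P : Fin k → Finset S), msCost d' P = ∑ m, dsum d' (P m) (P m) := by
    intro P; rfl
  have hdiff : msCost d' Q - msCost d' C
      = ∑ m, (dsum d' (Q m) (Q m) - dsum d' (C m) (C m)) := by
    rw [hmsC, hmsC, Finset.sum_sub_distrib]
  have hsumF : ∑ m, (dsum d' (Q m) (Q m) - dsum d' (C m) (C m))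
      = (dsum d' (Q i) (Q i) - dsum d' (C i) (C i))
        + (dsum d' (Q j) (Q j) - dsum d' (C j) (C j)) := by
    have h1 : ∑ m ∈ ({i, j} : Finset (Fin k)),
        (dsum d' (Q m) (Q m) - dsum d' (C m) (C m))
        = ∑ m, (dsum d' (Q m) (Q m) - dsum d' (C m) (C m)) := by
      refine Finset.sum_subset (Finset.subset_univ _) ?_
      intro m _ hm
      simp only [Finset.mem_insert, Finset.mem_singleton, not_or] at hm
      rw [hQo m hm.1 hm.2]
      ring
    rw [← h1, Finset.sum_pair hij]
  have hsymm : dsum dist B A = dsum dist A B := dsum_swap dist (fun p q => dist_comm p q) B A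
  have hsymm2 : dsum dist (C j) A = dsum dist A (C j) :=
    dsum_swap dist (fun p q => dist_comm p q) (C j) A
  have hfin : 0 < msCost d' Q - msCost d' C := sub_pos.mpr hlt
  rw [hdiff, hsumF, cQi, cCi, cQj, cCj, hsymm, hsymm2] at hfin
  linarith
end

section
/- Let integers h ≥ 0, g ≥ 0, m_1,...,m_h ≥ 2, and 0 = l_0 < l_1 < ... < l_g with l_j − l_{j−1} ≥ 2 for all j, satisfying Σ_i m_i − h = l_g − g. Then 2·Σ_{j=1}^g C(l_j − l_{j−1}, 2) ≥ Σ_{i=1}^h m_i, where C(n,2) = n(n−1)/2. -/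
lemma stmt18_aux (l : ℕ → ℕ) (hl0 : l 0 = 0) :
    ∀ g : ℕ, (∀ j, 1 ≤ j → j ≤ g → l (j - 1) + 2 ≤ l j) →
      2 * l g ≤ 2 * g + 2 * ∑ j ∈ Finset.Icc 1 g, Nat.choose (l j - l (j - 1)) 2 := by
  intro g
  induction g with
  | zero => simp [hl0]
  | succ n ih =>
    intro hstep
    have hn := ih (fun j h1 h2 => hstep j h1 (h2.trans (Nat.le_succ n)))
    rw [Finset.sum_Icc_succ_top (Nat.le_add_left 1 n)]
    simp only [Nat.add_sub_cancel]
    have hd : l n + 2 ≤ l (n + 1) := by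
      have := hstep (n + 1) (Nat.le_add_left 1 n) le_rfl
      simpa using this
    obtain ⟨e, he⟩ : ∃ e, l (n + 1) - l n = e + 2 := ⟨l (n + 1) - l n - 2, by omega⟩
    have hc : e + 1 ≤ (l (n + 1) - l n).choose 2 := by
      rw [he, Nat.choose_succ_succ, Nat.choose_one_right]
      omega
    omega

/-- counting lemma. Given h clusters split into m_1,...,m_h ≥ 2 parts and g
unions of sizes l_j − l_{j−1} ≥ 2 with Σ_i m_i − h = l_g − g, we have
2·Σ_j C(l_j − l_{j−1}, 2) ≥ Σ_i m_i. -/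
theorem stmt18 (h g : ℕ) (m : ℕ → ℕ) (l : ℕ → ℕ)
    (hm : ∀ i ∈ Finset.range h, 2 ≤ m i)
    (hl0 : l 0 = 0)
    (hstep : ∀ j, 1 ≤ j → j ≤ g → l (j - 1) + 2 ≤ l j)
    (hbal : (∑ i ∈ Finset.range h, m i) + g = l g + h) :
    ∑ i ∈ Finset.range h, m i ≤
      2 * ∑ j ∈ Finset.Icc 1 g, Nat.choose (l j - l (j - 1)) 2 := by
  have hsum : 2 * h ≤ ∑ i ∈ Finset.range h, m i := by
    calc 2 * h = ∑ _i ∈ Finset.range h, 2 := by simp [mul_comm]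
    _ ≤ ∑ i ∈ Finset.range h, m i := Finset.sum_le_sum hm
  have := stmt18_aux l hl0 g hstep
  omega
end
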